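/- arXiv:1909.10689 — 9 statements merged into one kernel-verified Lean document; each statement's English description precedes it below -/
import Mathlib

section
/- For every smooth function u on (0,1] with compact support in (0,1] (i.e., u vanishes near 0), one has ∫₀¹ |u'(t)|^p dt ≥ (1 - 1/p)^p ∫₀¹ |u(t)|^p / t^p dt + (1 - 1/p)^{p-1} |u(1)|^p. -/
open MeasureTheory Real Set Filter

section Hidden
variable {p : ℝ}

lemma tendsto_abs_rpow_zero (hp : 1 < p) :
    Filter.Tendsto (fun y : ℝ => |y| ^ (p - 1)) (nhds 0) (nhds 0) := by
  have h1 : ContinuousAt (fun z : ℝ => z ^ (p - 1)) (|(0:ℝ)|) :=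
    Real.continuousAt_rpow_const _ _ (Or.inr (by linarith))
  have hc : ContinuousAt (fun y : ℝ => |y| ^ (p - 1)) 0 := h1.comp continuous_abs.continuousAt
  have := hc.tendsto
  simpa [Real.zero_rpow (sub_ne_zero.mpr hp.ne')] using this

lemma abs_abs_rpow_mul_le (hp : 1 < p) (x : ℝ) :
    |(|x| ^ (p - 2) * x)| ≤ |x| ^ (p - 1) := by
  rcases eq_or_ne x 0 with rfl | hx
  · simp only [abs_zero, mul_zero]
    exact Real.rpow_nonneg le_rfl _
  · have hy' : (0:ℝ) < |x| := abs_pos.mpr hx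
    rw [abs_mul, abs_rpow_of_nonneg (abs_nonneg x), abs_abs,
      show p - 1 = (p - 2) + 1 by ring, Real.rpow_add hy', Real.rpow_one]

lemma continuous_abs_rpow_mul (hp : 1 < p) :
    Continuous fun x : ℝ => |x| ^ (p - 2) * x := by
  rw [continuous_iff_continuousAt]
  intro x
  rcases eq_or_ne x 0 with rfl | hx
  · rw [ContinuousAt]
    have h0 : |(0:ℝ)| ^ (p - 2) * (0:ℝ) = 0 := by simp
    rw [h0]
    apply squeeze_zero_norm (a := fun y : ℝ => |y| ^ (p - 1))
    · intro y
      rw [Real.norm_eq_abs]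
      exact abs_abs_rpow_mul_le hp y
    · exact tendsto_abs_rpow_zero hp
  · have h1 : ContinuousAt (fun z : ℝ => z ^ (p - 2)) (|x|) :=
      Real.continuousAt_rpow_const _ _ (Or.inl (abs_ne_zero.mpr hx))
    exact (h1.comp continuous_abs.continuousAt).mul continuousAt_id

lemma young_aux (hp : 1 < p) {X Y : ℝ} (hX : 0 ≤ X) (hY : 0 ≤ Y) :
    p * X * Y ^ (p - 1) ≤
      ((p - 1) / p) ^ (1 - p) * X ^ p + (p - 1) * ((p - 1) / p) * Y ^ p := by
  have hp0 : (0:ℝ) < p := by linarith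
  have hne : p - 1 ≠ 0 := sub_ne_zero.mpr hp.ne'
  set c : ℝ := (p - 1) / p with hc
  have hc0 : 0 < c := div_pos (by linarith) hp0
  set q : ℝ := p.conjExponent with hq'
  have hq : q = p / (p - 1) := rfl
  have hpq : p.HolderConjugate q := Real.HolderConjugate.conjExponent hp
  have hq0 : q ≠ 0 := hpq.symm.ne_zero
  have h1 : (p - 1) * q = p := hpq.sub_one_mul_conj
  set k : ℝ := c ^ ((1 - p) / p) with hk
  have hk0 : 0 < k := Real.rpow_pos_of_pos hc0 _
  have hyoung := Real.young_inequality_of_nonneg (a := X * k) (b := Y ^ (p - 1) / k)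
    (mul_nonneg hX hk0.le) (div_nonneg (Real.rpow_nonneg hY _) hk0.le) hpq
  have hXk : (X * k) ^ p = X ^ p * c ^ (1 - p) := by
    rw [Real.mul_rpow hX hk0.le, hk, ← Real.rpow_mul hc0.le,
      div_mul_cancel₀ _ hp0.ne']
  have h2 : (1 - p) / p * q = -1 := by
    rw [hq]; field_simp; ring
  have hYk : (Y ^ (p - 1) / k) ^ q = Y ^ p * c := by
    rw [div_rpow (Real.rpow_nonneg hY _) hk0.le, ← Real.rpow_mul hY, ← Real.rpow_mul hc0.le,
      h1, h2, Real.rpow_neg_one, div_eq_mul_inv, inv_inv]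
  have hXYk : X * k * (Y ^ (p - 1) / k) = X * Y ^ (p - 1) := by
    field_simp
  rw [hXYk, hXk, hYk] at hyoung
  have := mul_le_mul_of_nonneg_left hyoung hp0.le
  have e1 : p * (X ^ p * c ^ (1 - p) / p) = c ^ (1 - p) * X ^ p := by
    field_simp
  have e2 : p * (Y ^ p * c / q) = (p - 1) * c * Y ^ p := by
    nth_rewrite 1 [← h1]
    field_simp
  calc p * X * Y ^ (p - 1) = p * (X * Y ^ (p - 1)) := by ring
    _ ≤ p * (X ^ p * c ^ (1 - p) / p + Y ^ p * c / q) := this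
    _ = c ^ (1 - p) * X ^ p + (p - 1) * c * Y ^ p := by rw [mul_add, e1, e2]

end Hidden

/-- One dimensional Hardy inequality with one-sided boundary condition. -/
theorem hardy_one_dim (p : ℝ) (hp : 1 < p) (u : ℝ → ℝ)
    (hu : ContDiff ℝ (⊤ : ℕ∞) u) (h0 : ∃ a > (0:ℝ), ∀ t < a, u t = 0) :
    ∫ t in Ioc (0:ℝ) 1, |deriv u t| ^ p ≥
      (1 - 1/p) ^ p * ∫ t in Ioc (0:ℝ) 1, |u t| ^ p / t ^ p
        + (1 - 1/p) ^ (p - 1) * |u 1| ^ p := by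
  have hp0 : (0:ℝ) < p := by linarith
  have hpne : p ≠ 0 := hp0.ne'
  have hcp : (1:ℝ) - 1/p = (p - 1) / p := by field_simp
  rw [hcp]
  set c : ℝ := (p - 1) / p with hc
  have hc0 : 0 < c := div_pos (by linarith) hp0
  obtain ⟨a, ha0, hua⟩ := h0
  set b : ℝ := min a 1 / 2 with hbdef
  have hmin : 0 < min a 1 := lt_min ha0 one_pos
  have hb0 : 0 < b := by rw [hbdef]; linarith
  have hba : b < a := by
    have h1 : min a 1 ≤ a := min_le_left _ _
    rw [hbdef]; linarith
  have hb1 : b < 1 := by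
    have h1 : min a 1 ≤ 1 := min_le_right _ _
    rw [hbdef]; linarith
  have hudiff : Differentiable ℝ u := hu.differentiable (by simp)
  have hucont : Continuous u := hu.continuous
  have hcd : Continuous (deriv u) := hu.continuous_deriv (by simp)
  have hub : ∀ t ≤ b, u t = 0 := fun t ht => hua t (lt_of_le_of_lt ht hba)
  have hdb : ∀ t ≤ b, deriv u t = 0 := by
    intro t ht
    have hev : u =ᶠ[nhds t] (fun _ => (0:ℝ)) := by
      filter_upwards [Iio_mem_nhds (lt_of_le_of_lt ht hba)] with y hy
      exact hua y hy
    rw [hev.deriv_eq]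
    simp
  set f : ℝ → ℝ := fun t => |deriv u t| ^ p with hf
  set g : ℝ → ℝ := fun t => |u t| ^ p / t ^ p with hg
  set F : ℝ → ℝ := fun t => |u t| ^ p * t ^ (1 - p) with hF
  set G : ℝ → ℝ := fun t => (p * |u t| ^ (p - 2) * u t) * deriv u t * t ^ (1 - p)
      + |u t| ^ p * ((1 - p) * t ^ (1 - p - 1)) with hG
  -- derivative of F
  have hderivF : ∀ t ∈ uIcc b 1, HasDerivAt F (G t) t := by
    intro t ht
    rw [uIcc_of_le hb1.le] at ht
    have ht0 : 0 < t := lt_of_lt_of_le hb0 ht.1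
    have h1 : HasDerivAt (fun y => |u y| ^ p) ((p * |u t| ^ (p - 2) * u t) * deriv u t) t :=
      (hasDerivAt_abs_rpow (u t) hp).comp t (hudiff t).hasDerivAt
    have h2 : HasDerivAt (fun y : ℝ => y ^ (1 - p)) ((1 - p) * t ^ (1 - p - 1)) t :=
      Real.hasDerivAt_rpow_const (Or.inl ht0.ne')
    exact h1.mul h2
  -- continuity facts
  have habs_p : Continuous fun t : ℝ => |u t| ^ p :=
    (Real.continuous_rpow_const hp0.le).comp hucont.abs
  have hpsi : Continuous fun t : ℝ => |u t| ^ (p - 2) * u t :=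
    (continuous_abs_rpow_mul hp).comp hucont
  have hrpow1 : ContinuousOn (fun t : ℝ => t ^ (1 - p)) (Icc b 1) := fun t ht =>
    (Real.continuousAt_rpow_const t _
      (Or.inl (ne_of_gt (lt_of_lt_of_le hb0 ht.1)))).continuousWithinAt
  have hrpow2 : ContinuousOn (fun t : ℝ => t ^ (1 - p - 1)) (Icc b 1) := fun t ht =>
    (Real.continuousAt_rpow_const t _
      (Or.inl (ne_of_gt (lt_of_lt_of_le hb0 ht.1)))).continuousWithinAt
  have hGcont : ContinuousOn G (uIcc b 1) := by
    rw [uIcc_of_le hb1.le]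
    have base : ContinuousOn (fun t : ℝ =>
        (p * (|u t| ^ (p - 2) * u t) * deriv u t) * t ^ (1 - p)
          + |u t| ^ p * ((1 - p) * t ^ (1 - p - 1))) (Icc b 1) :=
      (((continuous_const.mul hpsi).mul hcd).continuousOn.mul hrpow1).add
        (habs_p.continuousOn.mul (continuousOn_const.mul hrpow2))
    apply ContinuousOn.congr base
    intro t ht
    simp only [hG]
    ring
  have hGint : IntervalIntegrable G volume b 1 := hGcont.intervalIntegrable
  have hFTC : ∫ t in b..1, G t = |u 1| ^ p := by
    rw [intervalIntegral.integral_eq_sub_of_hasDerivAt hderivF hGint]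
    rw [hF]
    simp [hub b le_rfl, Real.one_rpow, Real.zero_rpow hpne]
  -- pointwise bound
  have hbound : ∀ t ∈ Icc b 1, G t ≤ c ^ (1 - p) * f t - c * g t := by
    intro t ht
    have ht0 : 0 < t := lt_of_lt_of_le hb0 ht.1
    set X : ℝ := |deriv u t| with hX
    set Y : ℝ := |u t| / t with hY
    have hX0 : 0 ≤ X := abs_nonneg _
    have hY0 : 0 ≤ Y := div_nonneg (abs_nonneg _) ht0.le
    have h2 : Y ^ (p - 1) = |u t| ^ (p - 1) * t ^ (1 - p) := by
      rw [hY, div_rpow (abs_nonneg _) ht0.le, div_eq_mul_inv, ← Real.rpow_neg ht0.le,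
        show -(p - 1) = 1 - p by ring]
    have key1 : (p * |u t| ^ (p - 2) * u t) * deriv u t * t ^ (1 - p)
        ≤ p * X * Y ^ (p - 1) := by
      have h1 : (|u t| ^ (p - 2) * u t) * deriv u t ≤ |u t| ^ (p - 1) * X := by
        calc (|u t| ^ (p - 2) * u t) * deriv u t
            ≤ |(|u t| ^ (p - 2) * u t) * deriv u t| := le_abs_self _
          _ = |(|u t| ^ (p - 2) * u t)| * X := by rw [abs_mul]
          _ ≤ |u t| ^ (p - 1) * X :=
              mul_le_mul_of_nonneg_right (abs_abs_rpow_mul_le hp _) hX0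
      calc (p * |u t| ^ (p - 2) * u t) * deriv u t * t ^ (1 - p)
          = p * ((|u t| ^ (p - 2) * u t) * deriv u t) * t ^ (1 - p) := by ring
        _ ≤ p * (|u t| ^ (p - 1) * X) * t ^ (1 - p) := by
            apply mul_le_mul_of_nonneg_right _ (Real.rpow_nonneg ht0.le _)
            exact mul_le_mul_of_nonneg_left h1 hp0.le
        _ = p * X * Y ^ (p - 1) := by rw [h2]; ring
    have key2 := young_aux hp hX0 hY0
    rw [← hc] at key2
    have hXp : X ^ p = f t := rfl
    have hYp : Y ^ p = g t := by
      simp only [hY, hg]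
      rw [div_rpow (abs_nonneg _) ht0.le]
    have hterm2 : |u t| ^ p * ((1 - p) * t ^ (1 - p - 1)) = (1 - p) * g t := by
      rw [show (1:ℝ) - p - 1 = -p by ring, Real.rpow_neg ht0.le]
      simp only [hg]
      rw [div_eq_mul_inv]
      ring
    have hcc : (p - 1) * c + (1 - p) = -c := by rw [hc]; field_simp; ring
    have hGt : G t = (p * |u t| ^ (p - 2) * u t) * deriv u t * t ^ (1 - p) + (1 - p) * g t := by
      simp only [hG]
      rw [hterm2]
    rw [hGt]
    rw [hXp, hYp] at key2
    have hlin : (p - 1) * c * g t + (1 - p) * g t = -c * g t := by linear_combination (g t) * hcc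
    linarith [key1, key2, hlin]
  -- integrability of f and g
  have hfcont : Continuous f := (Real.continuous_rpow_const hp0.le).comp hcd.abs
  have hgcontOn : ContinuousOn g (Icc b 1) := by
    apply habs_p.continuousOn.div
    · exact fun t ht => (Real.continuousAt_rpow_const t _
        (Or.inl (ne_of_gt (lt_of_lt_of_le hb0 ht.1)))).continuousWithinAt
    · exact fun t ht => (Real.rpow_pos_of_pos (lt_of_lt_of_le hb0 ht.1) p).ne'
  have hfint : IntervalIntegrable f volume b 1 := hfcont.intervalIntegrable b 1
  have hgint : IntervalIntegrable g volume b 1 := by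
    apply ContinuousOn.intervalIntegrable
    rwa [uIcc_of_le hb1.le]
  -- integrate the bound
  have hmono := intervalIntegral.integral_mono_on hb1.le hGint
    ((hfint.const_mul (c ^ (1 - p))).sub (hgint.const_mul c)) hbound
  rw [intervalIntegral.integral_sub (hfint.const_mul _) (hgint.const_mul _),
    intervalIntegral.integral_const_mul, intervalIntegral.integral_const_mul, hFTC] at hmono
  -- reduce set integrals to interval integrals
  have hgzero : ∀ t ∈ Ioc (0:ℝ) b, g t = 0 := by
    intro t ht
    simp only [hg]
    rw [hub t ht.2]
    simp [Real.zero_rpow hpne]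
  have hgz : IntegrableOn g (Ioc (0:ℝ) b) volume :=
    (integrableOn_congr_fun hgzero measurableSet_Ioc).mpr integrableOn_zero
  have hgb1 : IntegrableOn g (Ioc b 1) volume :=
    (hgcontOn.integrableOn_Icc).mono_set Ioc_subset_Icc_self
  have hsplit : ∀ h : ℝ → ℝ, (∀ t ∈ Ioc (0:ℝ) b, h t = 0) → IntegrableOn h (Ioc b 1) volume →
      ∫ t in Ioc (0:ℝ) 1, h t = ∫ t in b..1, h t := by
    intro h hzero hint
    rw [intervalIntegral.integral_of_le hb1.le]
    rw [show Ioc (0:ℝ) 1 = Ioc 0 b ∪ Ioc b 1 from (Ioc_union_Ioc_eq_Ioc hb0.le hb1.le).symm]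
    have hz : IntegrableOn h (Ioc (0:ℝ) b) volume :=
      (integrableOn_congr_fun hzero measurableSet_Ioc).mpr integrableOn_zero
    rw [MeasureTheory.setIntegral_union (Ioc_disjoint_Ioc_of_le le_rfl) measurableSet_Ioc hz hint,
      setIntegral_eq_zero_of_forall_eq_zero hzero, zero_add]
  have hIf : ∫ t in Ioc (0:ℝ) 1, f t = ∫ t in b..1, f t := by
    apply hsplit
    · intro t ht
      simp only [hf]
      rw [hdb t ht.2]
      simp [Real.zero_rpow hpne]
    · exact hfcont.integrableOn_Ioc
  have hIg : ∫ t in Ioc (0:ℝ) 1, g t = ∫ t in b..1, g t := hsplit g hgzero hgb1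
  have hgIoc : IntegrableOn g (Ioc (0:ℝ) 1) volume := by
    rw [show Ioc (0:ℝ) 1 = Ioc 0 b ∪ Ioc b 1 from (Ioc_union_Ioc_eq_Ioc hb0.le hb1.le).symm]
    exact hgz.union hgb1
  -- the boundary constant sits inside the integral
  have hB0 : (0:ℝ) ≤ |u 1| ^ p := Real.rpow_nonneg (abs_nonneg _) _
  have hconst : IntegrableOn (fun _ : ℝ => c ^ (p - 1) * |u 1| ^ p) (Ioc (0:ℝ) 1) volume := by
    apply (integrableOn_const_iff).mpr
    right
    rw [Real.volume_Ioc]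
    exact ENNReal.ofReal_lt_top
  have hsum : ∫ t in Ioc (0:ℝ) 1, (|u t| ^ p / t ^ p + c ^ (p - 1) * |u 1| ^ p)
      = (∫ t in Ioc (0:ℝ) 1, g t) + c ^ (p - 1) * |u 1| ^ p := by
    rw [MeasureTheory.integral_add hgIoc hconst, MeasureTheory.setIntegral_const,
      Real.volume_real_Ioc]
    norm_num
  rw [ge_iff_le, hsum, hIg, hIf]
  -- final algebra
  have hKpos : 0 < c ^ (p - 1) := Real.rpow_pos_of_pos hc0 _
  have hK : c ^ (p - 1) * c ^ (1 - p) = 1 := by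
    rw [← Real.rpow_add hc0]
    norm_num
  have hK2 : c ^ (p - 1) * c = c ^ p := by
    have he : c ^ p = c ^ (p - 1 + 1) := by norm_num
    rw [he, Real.rpow_add_one hc0.ne']
  have h3 := mul_le_mul_of_nonneg_left hmono hKpos.le
  have h4 : c ^ (p - 1) * (c ^ (1 - p) * (∫ t in b..1, f t) - c * ∫ t in b..1, g t)
      = (∫ t in b..1, f t) - c ^ p * ∫ t in b..1, g t := by
    rw [mul_sub, ← mul_assoc, ← mul_assoc, hK, hK2, one_mul]
  rw [h4] at h3
  have hcle1 : c ≤ 1 := by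
    rw [hc, div_le_one hp0]; linarith
  have hcp1 : c ^ p ≤ 1 := Real.rpow_le_one hc0.le hcle1 hp0.le
  have h5 : c ^ p * (c ^ (p - 1) * |u 1| ^ p) ≤ c ^ (p - 1) * |u 1| ^ p :=
    mul_le_of_le_one_left (mul_nonneg hKpos.le hB0) hcp1
  have hexp : c ^ p * ((∫ t in b..1, g t) + c ^ (p - 1) * |u 1| ^ p)
      = c ^ p * (∫ t in b..1, g t) + c ^ p * (c ^ (p - 1) * |u 1| ^ p) := by ring
  rw [hexp]
  have hcpp : 0 < c ^ p := Real.rpow_pos_of_pos hc0 _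
  have hAge : c ^ p * (∫ t in b..1, g t) ≤ c ^ p * (∫ t in b..1, g t) := le_refl _
  linarith [h3, h5]
end

section
/- Assume α > 1 - 1/p. Then for every u ∈ C_c^∞((0,1]), ∫₀¹ |u'(t)|^p t^{αp} dt + Λ_{α,p}^{1-1/p} |u(1)|^p ≥ Λ_{α,p} ∫₀¹ (|u(t)|^p / t^p) t^{αp} dt, where Λ_{α,p} = |1 - 1/p - α|^p. -/
open MeasureTheory Real Set Filter

lemma norm_aux {p : ℝ} (hp : 1 < p) (y : ℝ) : ‖|y| ^ (p-2) * y‖ ≤ |y| ^ (p-1) := by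
  rcases eq_or_ne y 0 with hy|hy
  · simp [hy, Real.zero_rpow (by linarith : p - 1 ≠ 0)]
  · have hy' : |y| ≠ 0 := abs_ne_zero.mpr hy
    rw [norm_mul, Real.norm_eq_abs, Real.norm_eq_abs,
      abs_of_nonneg (Real.rpow_nonneg (abs_nonneg y) _),
      show p - 1 = (p-2) + 1 by ring, Real.rpow_add_one hy']

lemma cont_aux {p : ℝ} (hp : 1 < p) :
    Continuous (fun x : ℝ => |x| ^ (p-2) * x) := by
  rw [continuous_iff_continuousAt]
  intro x
  rcases eq_or_ne x 0 with h|h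
  · subst h
    have h2 : Tendsto (fun y : ℝ => |y| ^ (p-1)) (nhds 0) (nhds 0) := by
      have hc : Continuous (fun y : ℝ => |y| ^ (p-1)) :=
        (Real.continuous_rpow_const (by linarith)).comp continuous_abs
      have h3 := hc.continuousAt (x := 0)
      rwa [ContinuousAt, show |(0:ℝ)| ^ (p-1) = 0 by
        simp [Real.zero_rpow (by linarith : p - 1 ≠ 0)]] at h3
    have := squeeze_zero_norm (norm_aux hp) h2
    simpa [ContinuousAt] using this
  · exact ((Real.continuousAt_rpow_const |x| (p-2) (Or.inl (abs_ne_zero.mpr h))).comp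
      continuous_abs.continuousAt).mul continuousAt_id

lemma abs_phi_le' {p : ℝ} (hp : 1 < p) (x : ℝ) : |(|x| ^ (p-2) * x)| ≤ |x| ^ (p-1) := by
  simpa only [Real.norm_eq_abs] using norm_aux hp x

lemma young_step {p lam α t x y : ℝ} (hp : 1 < p) (hlam : 0 < lam) (ht : 0 < t) :
    -(p * (|x| ^ (p-2) * x) * y * t ^ (α*p - p + 1)) ≤
      lam ^ (1-p) * (|y| ^ p * t ^ (α*p)) + (p-1) * lam * (|x| ^ p * t ^ (α*p - p)) := by
  have hp0 : (0:ℝ) < p := by linarith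
  have hp1 : (0:ℝ) < p - 1 := by linarith
  set q : ℝ := α * p - p + 1 with hq
  have htq : (0:ℝ) < t ^ q := Real.rpow_pos_of_pos ht q
  set c : ℝ := lam ^ ((p-1)/p) with hc
  have hc0 : 0 < c := Real.rpow_pos_of_pos hlam _
  set p' : ℝ := p / (p-1) with hp'
  have hp'0 : 0 < p' := by positivity
  set e1 : ℝ := t ^ α with he1
  set e2 : ℝ := t ^ ((α-1)*(p-1)) with he2
  have he10 : 0 < e1 := Real.rpow_pos_of_pos ht _
  have he20 : 0 < e2 := Real.rpow_pos_of_pos ht _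
  set A : ℝ := |y| * e1 / c with hA
  set B : ℝ := c * (|x| ^ (p-1) * e2) with hB
  have hA0 : 0 ≤ A := by positivity
  have hB0 : 0 ≤ B := by positivity
  have hpq : p.HolderConjugate p' := (Real.holderConjugate_iff_eq_conjExponent hp).mpr rfl
  have young := Real.young_inequality_of_nonneg hA0 hB0 hpq
  have young2 : p * (A * B) ≤ A ^ p + (p-1) * B ^ p' := by
    calc p * (A*B) ≤ p * (A^p/p + B^p'/p') :=
          mul_le_mul_of_nonneg_left young hp0.le
      _ = A^p + (p-1) * B^p' := by
          rw [hp']; field_simp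
  have hAB : p * (A * B) = p * (|x| ^ (p-1) * |y| * t ^ q) := by
    have h12 : e1 * e2 = t ^ q := by
      rw [he1, he2, ← Real.rpow_add ht]; congr 1; rw [hq]; ring
    rw [hA, hB]
    field_simp
    linear_combination (|y| * |x| ^ (p-1)) * h12
  have hcp : c ^ p = lam ^ (p-1) := by
    rw [hc, ← Real.rpow_mul hlam.le]; congr 1; field_simp
  have hcp' : c ^ p' = lam := by
    rw [hc, ← Real.rpow_mul hlam.le, hp']
    rw [show (p-1)/p * (p/(p-1)) = 1 by field_simp]
    exact Real.rpow_one lam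
  have hAp : A ^ p = lam ^ (1-p) * (|y| ^ p * t ^ (α*p)) := by
    rw [hA, Real.div_rpow (by positivity) hc0.le,
      Real.mul_rpow (abs_nonneg y) he10.le, hcp, he1, ← Real.rpow_mul ht.le,
      div_eq_mul_inv, ← Real.rpow_neg hlam.le, mul_comm]
    congr 2
    ring
  have hBp : B ^ p' = lam * (|x| ^ p * t ^ (α*p - p)) := by
    rw [hB, Real.mul_rpow hc0.le (by positivity),
      Real.mul_rpow (by positivity) he20.le, hcp',
      ← Real.rpow_mul (abs_nonneg x), ← Real.rpow_mul ht.le]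
    rw [show (p-1) * p' = p by rw [hp']; field_simp,
      show (α-1)*(p-1) * p' = α * p - p by rw [hp']; field_simp]
  calc -(p * (|x| ^ (p-2) * x) * y * t ^ q)
      ≤ |p * (|x| ^ (p-2) * x) * y * t ^ q| := neg_le_abs _
    _ = p * (|(|x| ^ (p-2) * x)| * |y| * t ^ q) := by
        rw [abs_mul, abs_mul, abs_mul, abs_of_pos hp0, abs_of_pos htq]; ring
    _ ≤ p * (|x| ^ (p-1) * |y| * t ^ q) := by
        gcongr
        exact abs_phi_le' hp x
    _ = p * (A * B) := hAB.symm
    _ ≤ A ^ p + (p-1) * B ^ p' := young2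
    _ = lam ^ (1-p) * (|y| ^ p * t ^ (α*p)) + (p-1) * lam * (|x| ^ p * t ^ (α*p - p)) := by
        rw [hAp, hBp]; ring

lemma eq_zero_on_closure {f : ℝ → ℝ} (hf : Continuous f) {b : ℝ}
    (h : ∀ t < b, f t = 0) : ∀ t ≤ b, f t = 0 := by
  intro t ht
  rcases lt_or_eq_of_le ht with h'|h'
  · exact h t h'
  · subst h'
    have h1 : Tendsto f (nhdsWithin t (Iio t)) (nhds (f t)) :=
      (hf.continuousAt).continuousWithinAt
    have h2 : f =ᶠ[nhdsWithin t (Iio t)] (fun _ => (0:ℝ)) := by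
      filter_upwards [self_mem_nhdsWithin] with s hs
      exact h s hs
    exact tendsto_nhds_unique (Filter.Tendsto.congr' h2 h1) tendsto_const_nhds

lemma split_int {f : ℝ → ℝ} {b : ℝ} (hb0 : 0 < b) (hb1 : b ≤ 1)
    (hzero : ∀ t ∈ Ioc (0:ℝ) b, f t = 0) (hcont : ContinuousOn f (Icc b 1)) :
    ∫ t in Ioc (0:ℝ) 1, f t = ∫ t in b..1, f t := by
  rw [intervalIntegral.integral_of_le hb1, ← Ioc_union_Ioc_eq_Ioc hb0.le hb1,
    setIntegral_union (Ioc_disjoint_Ioc_of_le le_rfl) measurableSet_Ioc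
      ((integrableOn_congr_fun hzero measurableSet_Ioc).mpr (integrableOn_zero))
      ((hcont.integrableOn_Icc).mono_set Ioc_subset_Icc_self)]
  rw [setIntegral_congr_fun measurableSet_Ioc hzero]
  simp

/-- Weighted Hardy inequality, critical case `α > 1 - 1/p`. -/
theorem weighted_hardy_critical (p α : ℝ) (hp : 1 < p) (hα : 1 - 1/p < α)
    (u : ℝ → ℝ) (hu : ContDiff ℝ (⊤ : ℕ∞) u) (h0 : ∃ a > (0:ℝ), ∀ t < a, u t = 0) :
    (∫ t in Ioc (0:ℝ) 1, |deriv u t| ^ p * t ^ (α * p))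
      + (|1 - 1/p - α| ^ p) ^ (1 - 1/p) * |u 1| ^ p ≥
      |1 - 1/p - α| ^ p * ∫ t in Ioc (0:ℝ) 1, (|u t| ^ p / t ^ p) * t ^ (α * p) := by
  obtain ⟨a, ha0, hua⟩ := h0
  have hp0 : (0:ℝ) < p := by linarith
  set lam : ℝ := α - (1 - 1/p) with hlamdef
  have hlam : 0 < lam := sub_pos.mpr hα
  have habs : |1 - 1/p - α| = lam := by
    rw [abs_of_neg (by linarith)]; rw [hlamdef]; ring
  set b : ℝ := min a 1 with hbdef
  have hb0 : 0 < b := lt_min ha0 one_pos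
  have hb1 : b ≤ 1 := min_le_right a 1
  have hcu : Continuous u := hu.continuous
  have hcd : Continuous (deriv u) := hu.continuous_deriv (by simp)
  have hub : ∀ t ≤ b, u t = 0 :=
    eq_zero_on_closure hcu (fun t ht => hua t (lt_of_lt_of_le ht (min_le_left a 1)))
  have hud : ∀ t ≤ b, deriv u t = 0 := by
    apply eq_zero_on_closure hcd
    intro t ht
    have hev : u =ᶠ[nhds t] (fun _ => (0:ℝ)) := by
      filter_upwards [Iio_mem_nhds ht] with s hs
      exact hub s hs.le
    rw [hev.deriv_eq]
    exact deriv_const t 0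
  have hpos : ∀ t ∈ Icc b 1, (0:ℝ) < t := fun t ht => lt_of_lt_of_le hb0 ht.1
  have huIcc : uIcc b 1 = Icc b 1 := uIcc_of_le hb1
  have contPow : ∀ r : ℝ, ContinuousOn (fun t : ℝ => t ^ r) (Icc b 1) := by
    intro r t ht
    exact (Real.continuousAt_rpow_const t r (Or.inl (hpos t ht).ne')).continuousWithinAt
  -- the three integrands
  have contF : ContinuousOn
      (fun t => p * (|u t| ^ (p-2) * u t) * deriv u t * t ^ (α*p - p + 1)) (Icc b 1) :=
    (((continuous_const.mul ((cont_aux hp).comp hcu)).mul hcd).continuousOn).mul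
      (contPow (α*p - p + 1))
  have contG : ContinuousOn (fun t => |u t| ^ p * t ^ (α*p - p)) (Icc b 1) :=
    (((Real.continuous_rpow_const hp0.le).comp hcu.abs).continuousOn).mul (contPow (α*p - p))
  have contH : ContinuousOn (fun t => |deriv u t| ^ p * t ^ (α*p)) (Icc b 1) :=
    (((Real.continuous_rpow_const hp0.le).comp hcd.abs).continuousOn).mul (contPow (α*p))
  have iF : IntervalIntegrable
      (fun t => p * (|u t| ^ (p-2) * u t) * deriv u t * t ^ (α*p - p + 1)) volume b 1 :=
    (huIcc ▸ contF).intervalIntegrable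
  have iG : IntervalIntegrable (fun t => |u t| ^ p * t ^ (α*p - p)) volume b 1 :=
    (huIcc ▸ contG).intervalIntegrable
  have iH : IntervalIntegrable (fun t => |deriv u t| ^ p * t ^ (α*p)) volume b 1 :=
    (huIcc ▸ contH).intervalIntegrable
  -- integration by parts
  have hderiv : ∀ t ∈ uIcc b 1, HasDerivAt (fun s => |u s| ^ p * s ^ (α*p - p + 1))
      (p * (|u t| ^ (p-2) * u t) * deriv u t * t ^ (α*p - p + 1)
        + (α*p - p + 1) * (|u t| ^ p * t ^ (α*p - p))) t := by
    intro t ht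
    rw [huIcc] at ht
    have ht0 : 0 < t := hpos t ht
    have h1 : HasDerivAt (fun s => |u s| ^ p) (p * |u t| ^ (p-2) * u t * deriv u t) t :=
      (hasDerivAt_abs_rpow (u t) hp).comp t ((hu.differentiable (by simp)) t).hasDerivAt
    have h2 : HasDerivAt (fun s : ℝ => s ^ (α*p - p + 1))
        ((α*p - p + 1) * t ^ (α*p - p + 1 - 1)) t :=
      Real.hasDerivAt_rpow_const (Or.inl ht0.ne')
    have h3 := h1.mul h2
    refine h3.congr_deriv ?_
    rw [show α*p - p + 1 - 1 = α*p - p by ring]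
    ring
  have key := intervalIntegral.integral_eq_sub_of_hasDerivAt hderiv
    (iF.add (iG.const_mul (α*p - p + 1)))
  rw [intervalIntegral.integral_add iF (iG.const_mul (α*p - p + 1)),
    intervalIntegral.integral_const_mul, hub b le_rfl, Real.one_rpow, abs_zero,
    Real.zero_rpow hp0.ne', zero_mul, mul_one, sub_zero] at key
  -- monotone estimate via Young
  have mono : ∫ t in b..1,
        -(p * (|u t| ^ (p-2) * u t) * deriv u t * t ^ (α*p - p + 1)) ≤
      ∫ t in b..1, (lam ^ (1-p) * (|deriv u t| ^ p * t ^ (α*p))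
        + (p-1) * lam * (|u t| ^ p * t ^ (α*p - p))) := by
    apply intervalIntegral.integral_mono_on hb1 iF.neg
      ((iH.const_mul _).add (iG.const_mul _))
    intro t ht
    exact young_step hp hlam (hpos t ht)
  rw [intervalIntegral.integral_neg,
    intervalIntegral.integral_add (iH.const_mul _) (iG.const_mul _),
    intervalIntegral.integral_const_mul, intervalIntegral.integral_const_mul] at mono
  set IG : ℝ := ∫ t in b..1, |u t| ^ p * t ^ (α*p - p) with hIG
  set IH : ℝ := ∫ t in b..1, |deriv u t| ^ p * t ^ (α*p) with hIH
  have hq : α*p - p + 1 = p * lam := by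
    rw [hlamdef]; field_simp; ring
  have hexp : (p-1) * lam * IG = p * lam * IG - lam * IG := by ring
  have hexp2 : (α*p - p + 1) * IG = p * lam * IG := by rw [hq]
  have h5 : lam * IG ≤ |u 1| ^ p + lam ^ (1-p) * IH := by linarith
  -- multiply by lam ^ (p-1)
  have hlp : (0:ℝ) ≤ lam ^ (p-1) := (Real.rpow_pos_of_pos hlam _).le
  have h6 := mul_le_mul_of_nonneg_left h5 hlp
  have e1 : lam ^ (p-1) * (lam * IG) = lam ^ p * IG := by
    rw [show p = p - 1 + 1 by ring, Real.rpow_add_one hlam.ne']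
    ring_nf
  have e2 : lam ^ (p-1) * lam ^ (1-p) = 1 := by
    rw [← Real.rpow_add hlam]; norm_num
  have h7 : lam ^ p * IG ≤ lam ^ (p-1) * |u 1| ^ p + IH := by
    rw [← e1]
    calc lam ^ (p-1) * (lam * IG) ≤ lam ^ (p-1) * (|u 1| ^ p + lam ^ (1-p) * IH) := h6
      _ = lam ^ (p-1) * |u 1| ^ p + (lam ^ (p-1) * lam ^ (1-p)) * IH := by ring
      _ = lam ^ (p-1) * |u 1| ^ p + IH := by rw [e2]; ring
  -- rewrite the set integrals
  have sJ : (∫ t in Ioc (0:ℝ) 1, |deriv u t| ^ p * t ^ (α * p)) = IH := by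
    rw [hIH]
    apply split_int hb0 hb1 _ contH
    intro t ht
    rw [hud t ht.2, abs_zero, Real.zero_rpow hp0.ne', zero_mul]
  have sI : (∫ t in Ioc (0:ℝ) 1, (|u t| ^ p / t ^ p) * t ^ (α * p)) = IG := by
    have heq : ∀ t ∈ Icc b 1, (|u t| ^ p / t ^ p) * t ^ (α * p) = |u t| ^ p * t ^ (α*p - p) := by
      intro t ht
      rw [Real.rpow_sub (hpos t ht)]
      ring
    rw [hIG]
    have : (∫ t in Ioc (0:ℝ) 1, (|u t| ^ p / t ^ p) * t ^ (α * p))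
        = ∫ t in b..1, (|u t| ^ p / t ^ p) * t ^ (α * p) := by
      apply split_int hb0 hb1
      · intro t ht
        rw [hub t ht.2, abs_zero, Real.zero_rpow hp0.ne', zero_div, zero_mul]
      · exact contG.congr (fun t ht => heq t ht)
    rw [this]
    apply intervalIntegral.integral_congr
    intro t ht
    exact heq t (huIcc ▸ ht)
  have e3 : (lam ^ p) ^ (1 - 1/p) = lam ^ (p-1) := by
    rw [← Real.rpow_mul hlam.le, show p * (1 - 1/p) = p - 1 by field_simp]
  rw [ge_iff_le, habs, sJ, sI, e3]
  linarith [h7]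
end

section
/- Let α = 1 - 1/p and R > e. Then for every u ∈ C_c^∞((0,1]), ∫₀¹ |u'(t)|^p t^{p-1} dt + (1-1/p)^{(p-1)(1-1/p)} (log R)^{1-p} |u(1)|^p ≥ (1-1/p)^p ∫₀¹ |u(t)|^p / (t (log(R/t))^p) dt. -/
open MeasureTheory Real Set


lemma sgnpow_cont (p : ℝ) (hp : 1 < p) :
    Continuous fun x : ℝ => |x| ^ (p - 1) * Real.sign x := by
  have habs : Continuous fun x : ℝ => |x| ^ (p - 1) := by
    apply continuous_iff_continuousAt.2
    intro x
    exact (Real.continuousAt_rpow_const _ _ (Or.inr (by linarith))).comp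
      continuous_abs.continuousAt
  rw [continuous_iff_continuousAt]
  intro x
  rcases lt_trichotomy x 0 with hx | hx | hx
  · have h : ∀ᶠ y in nhds x, |y| ^ (p-1) * Real.sign y = -(|y| ^ (p-1)) := by
      filter_upwards [eventually_lt_nhds hx] with y hy
      rw [Real.sign_of_neg hy]; ring
    exact ContinuousAt.congr (habs.continuousAt.neg) (by filter_upwards [h] with y hy; rw [hy]; rfl)
  · subst hx
    have : Filter.Tendsto (fun y : ℝ => |y| ^ (p-1) * Real.sign y) (nhds 0) (nhds 0) := by
      apply squeeze_zero_norm (a := fun y : ℝ => |y| ^ (p-1))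
      · intro y
        rw [norm_mul, Real.norm_eq_abs (|y| ^ (p-1)), Real.norm_eq_abs,
          abs_of_nonneg (Real.rpow_nonneg (abs_nonneg y) _)]
        calc |y| ^ (p-1) * |Real.sign y| ≤ |y| ^ (p-1) * 1 := by
              exact mul_le_mul_of_nonneg_left (by
                rcases Real.sign_apply_eq y with h|h|h <;> simp [h]) (Real.rpow_nonneg (abs_nonneg y) _)
          _ = |y| ^ (p-1) := mul_one _
      · have h2 := habs.continuousAt (x := (0:ℝ))
        unfold ContinuousAt at h2
        simp only [abs_zero, Real.zero_rpow (by linarith : p - 1 ≠ 0)] at h2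
        exact h2
    simpa [ContinuousAt] using this
  · have h : ∀ᶠ y in nhds x, |y| ^ (p-1) * Real.sign y = |y| ^ (p-1) := by
      filter_upwards [eventually_gt_nhds hx] with y hy
      rw [Real.sign_of_pos hy]; ring
    exact ContinuousAt.congr habs.continuousAt (by filter_upwards [h] with y hy; rw [hy])

lemma young_pt (p c d T A : ℝ) (hp : 1 < p) (hc : 0 ≤ c) (hd : 0 ≤ d)
    (hT : 0 < T) (hA : 0 < A) :
    p * (c ^ (p - 1) * d * A ^ (1 - p)) ≤
      (p - 1) * (1 - 1/p) * (c ^ p / (T * A ^ p))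
        + (1 - 1/p) ^ (1 - p) * (d ^ p * T ^ (p - 1)) := by
  have hp0 : (0:ℝ) < p := by linarith
  have hp1 : (0:ℝ) < p - 1 := by linarith
  set α : ℝ := 1 - 1/p with hαdef
  have hα0 : 0 < α := by
    rw [hαdef]; have : 1/p < 1 := by rw [div_lt_one hp0]; exact hp
    linarith
  set q : ℝ := p / (p - 1) with hqdef
  have hpq : q.HolderConjugate p := (Real.HolderConjugate.conjExponent hp).symm
  set r : ℝ := (p - 1) / p with hrdef
  have hrq : r * q = 1 := by rw [hrdef, hqdef]; field_simp
  have hrp : r * p = p - 1 := by rw [hrdef]; field_simp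
  set B1 : ℝ := c ^ p / (T * A ^ p) with hB1
  have hB1nn : 0 ≤ B1 := by positivity
  set X : ℝ := B1 ^ r with hX
  set Y : ℝ := d * T ^ r with hY
  set l : ℝ := α ^ r with hl
  have hXnn : 0 ≤ X := Real.rpow_nonneg hB1nn _
  have hYnn : 0 ≤ Y := by positivity
  have hl0 : 0 < l := Real.rpow_pos_of_pos hα0 _
  have key := Real.young_inequality_of_nonneg (mul_nonneg hl0.le hXnn)
    (div_nonneg hYnn hl0.le) hpq
  -- key : (l*X)*(Y/l) ≤ (l*X)^q/q + (Y/l)^p/p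
  have h1 : l * X * (Y / l) = X * Y := by field_simp
  have hTpos : (0:ℝ) < T ^ r := Real.rpow_pos_of_pos hT _
  have hApos : (0:ℝ) < A ^ (p - 1) := Real.rpow_pos_of_pos hA _
  have hA1 : A ^ (1 - p) = (A ^ (p - 1))⁻¹ := by
    rw [show (1 - p) = -(p - 1) by ring, Real.rpow_neg hA.le]
  have hXeq : X = c ^ (p - 1) / (T ^ r * A ^ (p - 1)) := by
    rw [hX, hB1, Real.div_rpow (by positivity) (by positivity),
      ← Real.rpow_mul hc, Real.mul_rpow hT.le (by positivity), ← Real.rpow_mul hA.le,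
      mul_comm p r, hrp]
  have hXY : X * Y = c ^ (p - 1) * d * A ^ (1 - p) := by
    rw [hXeq, hY, hA1]; field_simp
  have h2 : (l * X) ^ q = α * B1 := by
    rw [Real.mul_rpow hl0.le hXnn, hl, hX, ← Real.rpow_mul hα0.le, ← Real.rpow_mul hB1nn,
      hrq, Real.rpow_one, Real.rpow_one]
  have h3 : (Y / l) ^ p = α ^ (1 - p) * (d ^ p * T ^ (p - 1)) := by
    rw [Real.div_rpow hYnn hl0.le, hY, Real.mul_rpow hd (Real.rpow_nonneg hT.le _),
      ← Real.rpow_mul hT.le, hrp, hl, ← Real.rpow_mul hα0.le, hrp,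
      show (1 - p) = -(p - 1) by ring, Real.rpow_neg hα0.le]
    field_simp
  rw [h1] at key
  have key2 := mul_le_mul_of_nonneg_left key hp0.le
  rw [h2, h3, hXY] at key2
  calc p * (c ^ (p - 1) * d * A ^ (1 - p))
      ≤ p * (α * B1 / q + α ^ (1 - p) * (d ^ p * T ^ (p - 1)) / p) := key2
    _ = (p - 1) * α * B1 + α ^ (1 - p) * (d ^ p * T ^ (p - 1)) := by
        rw [hqdef]; field_simp

lemma my_hasDerivAt_abs_rpow (p : ℝ) (hp : 1 < p) (x : ℝ) :
    HasDerivAt (fun y : ℝ => |y| ^ p) (p * (|x| ^ (p - 1) * Real.sign x)) x := by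
  rcases lt_trichotomy x 0 with hx | hx | hx
  · have h : HasDerivAt (fun y : ℝ => (-y) ^ p) (p * (-x) ^ (p - 1) * (-1)) x :=
      (Real.hasDerivAt_rpow_const (p := p) (x := -x) (Or.inl (by linarith))).comp x
        (hasDerivAt_neg x)
    have he : (fun y : ℝ => (-y) ^ p) =ᶠ[nhds x] fun y => |y| ^ p := by
      filter_upwards [eventually_lt_nhds hx] with y hy
      rw [abs_of_neg hy]
    have := h.congr_of_eventuallyEq he.symm
    refine this.congr_deriv ?_
    rw [abs_of_neg hx, Real.sign_of_neg hx]; ring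
  · subst hx
    simp only [Real.sign_zero, mul_zero]
    rw [hasDerivAt_iff_tendsto]
    simp only [sub_zero, smul_zero, abs_zero, Real.zero_rpow (by linarith : p ≠ 0)]
    apply squeeze_zero (g := fun y : ℝ => |y| ^ (p - 1)) (fun y => by positivity)
    · intro y
      rcases eq_or_ne y 0 with rfl | hy
      · simp [Real.zero_rpow (by linarith : p - 1 ≠ 0)]
      · rw [norm_eq_abs, norm_eq_abs, abs_of_nonneg (Real.rpow_nonneg (abs_nonneg y) p)]
        rw [show |y| ^ p = |y| * |y| ^ (p - 1) by
          rw [← Real.rpow_one_add' (abs_nonneg y) (by linarith)]; ring_nf]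
        rw [← mul_assoc, inv_mul_cancel₀ (abs_ne_zero.2 hy), one_mul]
    · have h3 : ContinuousAt (fun y : ℝ => |y| ^ (p - 1)) 0 :=
        ((Real.continuousAt_rpow_const _ _ (Or.inr (by linarith)))).comp
          continuous_abs.continuousAt
      unfold ContinuousAt at h3
      simp only [abs_zero, Real.zero_rpow (by linarith : p - 1 ≠ 0)] at h3
      exact h3
  · have h : HasDerivAt (fun y : ℝ => y ^ p) (p * x ^ (p - 1)) x :=
      Real.hasDerivAt_rpow_const (Or.inl (ne_of_gt hx))
    have he : (fun y : ℝ => y ^ p) =ᶠ[nhds x] fun y => |y| ^ p := by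
      filter_upwards [eventually_gt_nhds hx] with y hy
      rw [abs_of_pos hy]
    have := h.congr_of_eventuallyEq he.symm
    refine this.congr_deriv ?_
    rw [abs_of_pos hx, Real.sign_of_pos hx]; ring


set_option maxHeartbeats 1000000 in
/-- Weighted Hardy inequality, critical case `α = 1 - 1/p`, with logarithmic weight. -/
theorem weighted_hardy_critical_log (p R : ℝ) (hp : 1 < p) (hR : Real.exp 1 < R)
    (u : ℝ → ℝ) (hu : ContDiff ℝ (⊤ : ℕ∞) u) (h0 : ∃ a > (0:ℝ), ∀ t < a, u t = 0) :
    (∫ t in Ioc (0:ℝ) 1, |deriv u t| ^ p * t ^ (p - 1))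
      + (1 - 1/p) ^ ((p - 1) * (1 - 1/p)) * (Real.log R) ^ (1 - p) * |u 1| ^ p ≥
      (1 - 1/p) ^ p *
        ∫ t in Ioc (0:ℝ) 1, |u t| ^ p / (t * (Real.log (R / t)) ^ p) := by
  obtain ⟨a, ha0, hua⟩ := h0
  have hp0 : (0:ℝ) < p := by linarith
  have hp1 : (0:ℝ) < p - 1 := by linarith
  set α : ℝ := 1 - 1/p with hαdef
  have hα0 : 0 < α := by
    rw [hαdef]
    have : 1/p < 1 := by rw [div_lt_one hp0]; exact hp
    linarith
  have hα1 : α < 1 := by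
    rw [hαdef]; have : 0 < 1/p := by positivity
    linarith
  have hR0 : (0:ℝ) < R := lt_trans (Real.exp_pos 1) hR
  have hlogR : 1 < Real.log R := by rwa [Real.lt_log_iff_exp_lt hR0]
  set b : ℝ := min a 1 / 2 with hbdef
  have hb0 : 0 < b := by rw [hbdef]; positivity
  have hba : b < a := by
    rw [hbdef]
    have h1 : min a 1 ≤ a := min_le_left a 1
    have h2 : 0 < min a 1 := lt_min ha0 one_pos
    linarith
  have hb1 : b < 1 := by
    rw [hbdef]
    have h1 : min a 1 ≤ 1 := min_le_right a 1
    have h2 : 0 < min a 1 := lt_min ha0 one_pos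
    linarith
  have hub : ∀ t ≤ b, u t = 0 := fun t ht => hua t (lt_of_le_of_lt ht hba)
  have hdub : ∀ t < a, deriv u t = 0 := by
    intro t ht
    have he : u =ᶠ[nhds t] fun _ => 0 := by
      filter_upwards [Iio_mem_nhds ht] with y hy
      exact hua y hy
    rw [he.deriv_eq, deriv_const]
  have hcu : Continuous u := hu.continuous
  have hcu' : Continuous (deriv u) := hu.continuous_deriv (by simp)
  set i : ℝ → ℝ := fun t => Real.log R - Real.log t with hidef
  have hipos : ∀ t ∈ Icc b 1, 0 < i t := by
    intro t ht
    have ht0 : 0 < t := lt_of_lt_of_le hb0 ht.1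
    have h1 : Real.log t ≤ 0 := Real.log_nonpos ht0.le ht.2
    simp only [hidef]; linarith
  have hIcc : uIcc b 1 = Icc b 1 := uIcc_of_le hb1.le
  -- integrands
  set g1 : ℝ → ℝ := fun t => |deriv u t| ^ p * t ^ (p - 1) with hg1
  set g2 : ℝ → ℝ := fun t => |u t| ^ p / (t * (i t) ^ p) with hg2
  set g3 : ℝ → ℝ := fun t => |u t| ^ (p - 1) * |deriv u t| * (i t) ^ (1 - p) with hg3
  set F : ℝ → ℝ := fun t => |u t| ^ p * (i t) ^ (1 - p) with hFdef
  set F' : ℝ → ℝ := fun t =>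
    p * (|u t| ^ (p - 1) * Real.sign (u t)) * deriv u t * (i t) ^ (1 - p)
      + |u t| ^ p * ((p - 1) * (i t) ^ (-p) * t⁻¹) with hF'def
  -- continuity facts
  have habsu : Continuous fun t => |u t| ^ p :=
    (continuous_abs.comp hcu).rpow_const (fun _ => Or.inr hp0.le)
  have habsu1 : Continuous fun t => |u t| ^ (p - 1) :=
    (continuous_abs.comp hcu).rpow_const (fun _ => Or.inr hp1.le)
  have habsu' : Continuous fun t => |deriv u t| ^ p :=
    (continuous_abs.comp hcu').rpow_const (fun _ => Or.inr hp0.le)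
  have hci : ContinuousOn i (Icc b 1) := by
    apply continuousOn_const.sub
    apply Real.continuousOn_log.mono
    intro t ht
    simp only [mem_compl_iff, mem_singleton_iff]
    exact (lt_of_lt_of_le hb0 ht.1).ne'
  have hcw : ∀ s : ℝ, ContinuousOn (fun t => (i t) ^ s) (Icc b 1) :=
    fun s => hci.rpow_const (fun t ht => Or.inl (hipos t ht).ne')
  have hct : ∀ s : ℝ, ContinuousOn (fun t : ℝ => t ^ s) (Icc b 1) :=
    fun s => continuousOn_id.rpow_const (fun t ht => Or.inl (lt_of_lt_of_le hb0 ht.1).ne')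
  have hcinv : ContinuousOn (fun t : ℝ => t⁻¹) (Icc b 1) :=
    continuousOn_id.inv₀ (fun t ht => (lt_of_lt_of_le hb0 ht.1).ne')
  have hcg1 : ContinuousOn g1 (Icc b 1) := habsu'.continuousOn.mul (hct (p - 1))
  have hcg2 : ContinuousOn g2 (Icc b 1) := by
    apply habsu.continuousOn.div (continuousOn_id.mul (hcw p))
    intro t ht
    have ht0 : 0 < t := lt_of_lt_of_le hb0 ht.1
    have := Real.rpow_pos_of_pos (hipos t ht) p
    show t * i t ^ p ≠ 0
    positivity
  have hcg3 : ContinuousOn g3 (Icc b 1) :=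
    (habsu1.continuousOn.mul (continuous_abs.comp hcu').continuousOn).mul (hcw (1 - p))
  have hcsgn : Continuous fun t => |u t| ^ (p - 1) * Real.sign (u t) :=
    (sgnpow_cont p hp).comp hcu
  have hcF' : ContinuousOn F' (Icc b 1) := by
    apply ContinuousOn.add
    · exact (((continuous_const.mul hcsgn).mul hcu').continuousOn).mul (hcw (1 - p))
    · exact habsu.continuousOn.mul ((continuousOn_const.mul (hcw (-p))).mul hcinv)
  -- derivative of F
  have hderivF : ∀ t ∈ Icc b 1, HasDerivAt F (F' t) t := by
    intro t ht
    have ht0 : 0 < t := lt_of_lt_of_le hb0 ht.1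
    have hui : HasDerivAt u (deriv u t) t := (hu.differentiable (by simp) t).hasDerivAt
    have hg := (my_hasDerivAt_abs_rpow p hp (u t)).comp t hui
    have hinner : HasDerivAt i (0 - t⁻¹) t :=
      (hasDerivAt_const t (Real.log R)).sub (Real.hasDerivAt_log ht0.ne')
    have houter := Real.hasDerivAt_rpow_const (p := 1 - p) (x := i t)
      (Or.inl (hipos t ht).ne')
    have hw := houter.comp t hinner
    have hmul := hg.mul hw
    refine HasDerivAt.congr_deriv hmul ?_
    rw [hF'def]
    simp only [Function.comp_def]
    rw [show (1 - p - 1 : ℝ) = -p by ring]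
    ring
  -- interval integrability
  have iJ : IntervalIntegrable g1 volume b 1 := by
    rw [← hIcc] at hcg1; exact hcg1.intervalIntegrable
  have iI : IntervalIntegrable g2 volume b 1 := by
    rw [← hIcc] at hcg2; exact hcg2.intervalIntegrable
  have iK : IntervalIntegrable g3 volume b 1 := by
    rw [← hIcc] at hcg3; exact hcg3.intervalIntegrable
  have iF' : IntervalIntegrable F' volume b 1 := by
    rw [← hIcc] at hcF'; exact hcF'.intervalIntegrable
  -- FTC
  have hFTC : ∫ t in b..1, F' t = F 1 - F b :=
    intervalIntegral.integral_eq_sub_of_hasDerivAt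
      (fun t ht => hderivF t (hIcc ▸ ht)) iF'
  have hFb : F b = 0 := by
    rw [hFdef]; simp only [hub b le_rfl, abs_zero, Real.zero_rpow hp0.ne', zero_mul]
  have hF1 : F 1 = |u 1| ^ p * (Real.log R) ^ (1 - p) := by
    rw [hFdef]; simp only [hidef, Real.log_one, sub_zero]
  -- pointwise inequality 1
  have hpt1 : ∀ t ∈ Icc b 1, (p - 1) * g2 t ≤ F' t + p * g3 t := by
    intro t ht
    have ht0 : 0 < t := lt_of_lt_of_le hb0 ht.1
    have hi0 := hipos t ht
    have hterm2 : (p - 1) * g2 t = |u t| ^ p * ((p - 1) * (i t) ^ (-p) * t⁻¹) := by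
      rw [hg2]
      simp only []
      rw [Real.rpow_neg hi0.le]
      have hip : (0:ℝ) < i t ^ p := Real.rpow_pos_of_pos hi0 p
      field_simp
    have h6 : |Real.sign (u t) * deriv u t| ≤ |deriv u t| := by
      rw [abs_mul]
      have hs1 : |Real.sign (u t)| ≤ 1 := by
        rcases Real.sign_apply_eq (u t) with h | h | h <;> simp [h]
      nlinarith [abs_nonneg (deriv u t)]
    have h7 : -|deriv u t| ≤ Real.sign (u t) * deriv u t := (abs_le.mp h6).1
    have h8 : (0:ℝ) ≤ |u t| ^ (p - 1) := Real.rpow_nonneg (abs_nonneg _) _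
    have hsb : -(|u t| ^ (p - 1) * |deriv u t|) ≤
        |u t| ^ (p - 1) * (Real.sign (u t) * deriv u t) := by nlinarith
    have hwnn : (0:ℝ) ≤ (i t) ^ (1 - p) := Real.rpow_nonneg hi0.le _
    have h9 := mul_le_mul_of_nonneg_right hsb hwnn
    have h10 := mul_le_mul_of_nonneg_left h9 hp0.le
    rw [hF'def, hg3]
    simp only []
    nlinarith [hterm2, h10]
  -- pointwise inequality 2 (Young)
  have hpt2 : ∀ t ∈ Icc b 1, p * g3 t ≤ (p - 1) * α * g2 t + α ^ (1 - p) * g1 t := by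
    intro t ht
    have ht0 : 0 < t := lt_of_lt_of_le hb0 ht.1
    exact young_pt p (|u t|) (|deriv u t|) t (i t) hp (abs_nonneg _) (abs_nonneg _)
      ht0 (hipos t ht)
  -- integrated inequalities
  set J : ℝ := ∫ t in b..1, g1 t with hJ
  set I : ℝ := ∫ t in b..1, g2 t with hI
  set K : ℝ := ∫ t in b..1, g3 t with hK
  have int1 : (p - 1) * I ≤ |u 1| ^ p * (Real.log R) ^ (1 - p) + p * K := by
    have hm := intervalIntegral.integral_mono_on hb1.le (iI.const_mul (p - 1))
      (iF'.add (iK.const_mul p)) hpt1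
    rw [intervalIntegral.integral_const_mul] at hm
    rw [intervalIntegral.integral_add iF' (iK.const_mul p),
      intervalIntegral.integral_const_mul, hFTC, hFb, hF1, sub_zero] at hm
    exact hm
  have int2 : p * K ≤ (p - 1) * α * I + α ^ (1 - p) * J := by
    have hm := intervalIntegral.integral_mono_on hb1.le (iK.const_mul p)
      ((iI.const_mul ((p - 1) * α)).add (iJ.const_mul (α ^ (1 - p)))) hpt2
    rw [intervalIntegral.integral_const_mul,
      intervalIntegral.integral_add (iI.const_mul ((p - 1) * α)) (iJ.const_mul (α ^ (1 - p))),
      intervalIntegral.integral_const_mul, intervalIntegral.integral_const_mul] at hm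
    exact hm
  set B : ℝ := |u 1| ^ p * (Real.log R) ^ (1 - p) with hBdef
  have hBnn : 0 ≤ B := by
    rw [hBdef]
    have := Real.rpow_nonneg (le_of_lt (lt_trans one_pos hlogR)) (1 - p)
    positivity
  have hαq : (p - 1) * (1 - α) = α := by rw [hαdef]; field_simp; ring
  have h11 : (p - 1) * (1 - α) * I = α * I := by rw [hαq]
  have hKey : α * I ≤ B + α ^ (1 - p) * J := by nlinarith [int1, int2, h11]
  have hX0 : (0:ℝ) < α ^ (p - 1) := Real.rpow_pos_of_pos hα0 _
  have h12 := mul_le_mul_of_nonneg_left hKey hX0.le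
  have e1 : α ^ (p - 1) * α = α ^ p := by
    calc α ^ (p - 1) * α = α ^ (p - 1) * α ^ (1:ℝ) := by rw [Real.rpow_one]
      _ = α ^ (p - 1 + 1) := (Real.rpow_add hα0 _ _).symm
      _ = α ^ p := by norm_num
  have e2 : α ^ (p - 1) * α ^ (1 - p) = 1 := by
    rw [← Real.rpow_add hα0]; norm_num
  have e1' : α ^ (p - 1) * α * I = α ^ p * I := by rw [e1]
  have e2' : α ^ (p - 1) * α ^ (1 - p) * J = J := by rw [e2, one_mul]
  have hfin0 : α ^ p * I ≤ α ^ (p - 1) * B + J := by nlinarith [h12, e1', e2']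
  have hcoef : α ^ (p - 1) ≤ α ^ ((p - 1) * α) :=
    Real.rpow_le_rpow_of_exponent_ge hα0 hα1.le (by nlinarith)
  have h13 : α ^ (p - 1) * B ≤ α ^ ((p - 1) * α) * B :=
    mul_le_mul_of_nonneg_right hcoef hBnn
  have hfin : α ^ p * I ≤ α ^ ((p - 1) * α) * (Real.log R) ^ (1 - p) * |u 1| ^ p + J := by
    have hBr : α ^ ((p - 1) * α) * (Real.log R) ^ (1 - p) * |u 1| ^ p
        = α ^ ((p - 1) * α) * B := by rw [hBdef]; ring
    rw [hBr]; linarith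
  -- convert the goal set-integrals to interval integrals
  have hconv : ∀ f : ℝ → ℝ, IntegrableOn f (Ioc b 1) volume →
      (∀ t ∈ Ioc (0:ℝ) b, f t = 0) →
      ∫ t in Ioc (0:ℝ) 1, f t = ∫ t in b..1, f t := by
    intro f hint hzero
    have hint0 : IntegrableOn f (Ioc 0 b) volume := by
      apply (integrableOn_congr_fun (fun t ht => hzero t ht) measurableSet_Ioc).mpr
      exact integrableOn_zero
    have hz : ∫ t in Ioc (0:ℝ) b, f t = 0 := by
      rw [setIntegral_congr_fun measurableSet_Ioc (fun t ht => hzero t ht)]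
      simp
    rw [← Set.Ioc_union_Ioc_eq_Ioc hb0.le hb1.le,
      setIntegral_union (Set.Ioc_disjoint_Ioc_of_le le_rfl) measurableSet_Ioc hint0 hint,
      hz, zero_add, intervalIntegral.integral_of_le hb1.le]
  have hJset : ∫ t in Ioc (0:ℝ) 1, |deriv u t| ^ p * t ^ (p - 1) = J := by
    rw [hJ]
    apply hconv g1 (hcg1.integrableOn_Icc.mono_set Ioc_subset_Icc_self)
    intro t ht
    rw [hg1]
    simp only [hdub t (lt_of_le_of_lt ht.2 hba), abs_zero,
      Real.zero_rpow hp0.ne', zero_mul]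
  have hIset : ∫ t in Ioc (0:ℝ) 1, |u t| ^ p / (t * (Real.log (R / t)) ^ p) = I := by
    set f : ℝ → ℝ := fun t => |u t| ^ p / (t * (Real.log (R / t)) ^ p) with hfdef
    have hfg2 : EqOn f g2 (Icc b 1) := by
      intro t ht
      have ht0 : 0 < t := lt_of_lt_of_le hb0 ht.1
      rw [hfdef, hg2]
      simp only [hidef]
      rw [Real.log_div hR0.ne' ht0.ne']
    have hintf : IntegrableOn f (Ioc b 1) volume := by
      apply (integrableOn_congr_fun (fun t ht => hfg2 (Ioc_subset_Icc_self ht))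
        measurableSet_Ioc).mpr
      exact hcg2.integrableOn_Icc.mono_set Ioc_subset_Icc_self
    rw [hconv f hintf ?_, hI]
    · apply intervalIntegral.integral_congr
      rw [hIcc]; exact hfg2
    · intro t ht
      rw [hfdef]
      simp only [hub t ht.2]
      rw [abs_zero, Real.zero_rpow hp0.ne', zero_div]
  rw [ge_iff_le, hJset, hIset]
  linarith [hfin]
end

section
/- Assume α ≥ 1 - 1/p. Then the infimum of ∫₀¹ |u'(t)|^p t^{αp} dt over all u ∈ C¹([0,1]) with u(0) = 0 and u(1) = 1 equals 0. -/
/-!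
Take `u_M(t) = log (1 + (e^M - 1) t²) / M`. It is increasing with `u_M 0 = 0`, `u_M 1 = 1`, and
`t u_M'(t) ≤ 2 / M`. Since `αp ≥ p - 1`, on `(0, 1]` we get
`u_M'^p t^{αp} ≤ u_M' (t u_M')^{p-1} ≤ (2/M)^{p-1} u_M'`, so the energy of `u_M` is at most
`(2/M)^{p-1} (u_M 1 - u_M 0) = (2/M)^{p-1}`, which tends to `0` as `M → ∞`.
-/

open MeasureTheory Real Set

noncomputable section

def weightedEnergy (p α : ℝ) (u : ℝ → ℝ) : ℝ :=
  ∫ t in Ioc (0:ℝ) 1, |deriv u t| ^ p * t ^ (α * p)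

lemma weightedEnergy_nonneg (p α : ℝ) (u : ℝ → ℝ) : 0 ≤ weightedEnergy p α u :=
  setIntegral_nonneg measurableSet_Ioc fun _ ht =>
    mul_nonneg (rpow_nonneg (abs_nonneg _) _) (rpow_nonneg ht.1.le _)

lemma rpow_mul_rpow_le_of_mul_le {p q t d c : ℝ} (hp : 1 ≤ p) (hq : p - 1 ≤ q)
    (ht₀ : 0 < t) (ht₁ : t ≤ 1) (hd : 0 ≤ d) (hc : t * d ≤ c) :
    d ^ p * t ^ q ≤ c ^ (p - 1) * d := by
  have hp' : 0 ≤ p - 1 := by linarith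
  calc d ^ p * t ^ q ≤ d ^ p * t ^ (p - 1) :=
        mul_le_mul_of_nonneg_left (rpow_le_rpow_of_exponent_ge ht₀ ht₁ hq) (rpow_nonneg hd _)
    _ = (t * d) ^ (p - 1) * d := by
        have hdp : d ^ p = d ^ (p - 1) * d := by
          conv_lhs => rw [show p = (p - 1) + 1 by ring]
          rw [rpow_add' hd (by linarith), rpow_one]
        rw [mul_rpow ht₀.le hd, hdp]
        ring
    _ ≤ c ^ (p - 1) * d := by gcongr

lemma weightedEnergy_le_of_mul_deriv_le {p α c : ℝ} {u : ℝ → ℝ} (hu : ContDiff ℝ 1 u)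
    (hp : 1 ≤ p) (hα : p - 1 ≤ α * p) (hu' : ∀ t ∈ Ioc (0:ℝ) 1, 0 ≤ deriv u t)
    (hc : ∀ t ∈ Ioc (0:ℝ) 1, t * deriv u t ≤ c) :
    weightedEnergy p α u ≤ c ^ (p - 1) * (u 1 - u 0) := by
  have hcont : Continuous (deriv u) := hu.continuous_deriv le_rfl
  have hftc : ∫ t in Ioc (0:ℝ) 1, deriv u t = u 1 - u 0 := by
    rw [← intervalIntegral.integral_of_le zero_le_one]
    exact intervalIntegral.integral_deriv_eq_sub (fun x _ => hu.differentiable one_ne_zero x)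
      (hcont.intervalIntegrable 0 1)
  calc weightedEnergy p α u ≤ ∫ t in Ioc (0:ℝ) 1, c ^ (p - 1) * deriv u t := by
        refine integral_mono_of_nonneg
          (ae_restrict_of_forall_mem measurableSet_Ioc fun _ ht => ?_)
          (hcont.integrableOn_Ioc.const_mul _)
          (ae_restrict_of_forall_mem measurableSet_Ioc fun t ht => ?_)
        · exact mul_nonneg (rpow_nonneg (abs_nonneg _) _) (rpow_nonneg ht.1.le _)
        · dsimp only
          rw [abs_of_nonneg (hu' t ht)]
          exact rpow_mul_rpow_le_of_mul_le hp hα ht.1 ht.2 (hu' t ht) (hc t ht)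
    _ = c ^ (p - 1) * (u 1 - u 0) := by rw [integral_const_mul, hftc]

def logBump (M t : ℝ) : ℝ := log (1 + (exp M - 1) * t ^ 2) / M

section logBump

variable {M : ℝ}

lemma exp_sub_one_nonneg (hM : 0 ≤ M) : 0 ≤ exp M - 1 := sub_nonneg.2 (one_le_exp hM)

lemma one_add_mul_sq_pos (hM : 0 ≤ M) (t : ℝ) : 0 < 1 + (exp M - 1) * t ^ 2 := by
  have := exp_sub_one_nonneg hM
  positivity

@[simp] lemma logBump_zero (M : ℝ) : logBump M 0 = 0 := by simp [logBump]

lemma logBump_one (hM : M ≠ 0) : logBump M 1 = 1 := by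
  simp [logBump, hM]

lemma hasDerivAt_logBump (hM : 0 ≤ M) (t : ℝ) :
    HasDerivAt (logBump M) (2 * (exp M - 1) * t / ((1 + (exp M - 1) * t ^ 2) * M)) t := by
  refine (((((hasDerivAt_pow 2 t).const_mul (exp M - 1)).const_add 1).log
    (one_add_mul_sq_pos hM t).ne').div_const M).congr_deriv ?_
  field_simp
  norm_num
  ring

lemma contDiff_logBump (hM : 0 ≤ M) : ContDiff ℝ 1 (logBump M) :=
  ((contDiff_const.add (contDiff_const.mul (contDiff_id.pow 2))).log
    fun t => (one_add_mul_sq_pos hM t).ne').div_const M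

lemma deriv_logBump_nonneg (hM : 0 ≤ M) {t : ℝ} (ht : 0 ≤ t) : 0 ≤ deriv (logBump M) t := by
  have := exp_sub_one_nonneg hM
  have := one_add_mul_sq_pos hM t
  rw [(hasDerivAt_logBump hM t).deriv]
  positivity

lemma mul_deriv_logBump_le (hM : 0 < M) (t : ℝ) : t * deriv (logBump M) t ≤ 2 / M := by
  have hn := exp_sub_one_nonneg hM.le
  have hpos := one_add_mul_sq_pos hM.le t
  rw [(hasDerivAt_logBump hM.le t).deriv, mul_div_assoc', div_le_div_iff₀ (by positivity) hM]
  nlinarith [mul_nonneg hn (sq_nonneg t)]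

lemma weightedEnergy_logBump_le {p α : ℝ} (hp : 1 ≤ p) (hα : p - 1 ≤ α * p) (hM : 0 < M) :
    weightedEnergy p α (logBump M) ≤ (2 / M) ^ (p - 1) := by
  simpa [logBump_one hM.ne'] using
    weightedEnergy_le_of_mul_deriv_le (contDiff_logBump hM.le) hp hα
      (fun t ht => deriv_logBump_nonneg hM.le ht.1.le) (fun t _ => mul_deriv_logBump_le hM t)

end logBump

end

/-- In the critical case `α ≥ 1 - 1/p`, the infimum of the weighted Dirichlet energy over
`W = {u ∈ C¹([0,1]) : u 0 = 0, u 1 = 1}` equals `0`. -/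
theorem critical_inf_zero (p α : ℝ) (hp : 1 < p) (hα : 1 - 1/p ≤ α) :
    sInf { I : ℝ | ∃ u : ℝ → ℝ, ContDiff ℝ 1 u ∧ u 0 = 0 ∧ u 1 = 1 ∧
      I = ∫ t in Ioc (0:ℝ) 1, |deriv u t| ^ p * t ^ (α * p) } = 0 := by
  have hαp : p - 1 ≤ α * p := by
    have := mul_le_mul_of_nonneg_right hα (by linarith : (0:ℝ) ≤ p)
    rwa [sub_mul, one_div_mul_cancel (by positivity), one_mul] at this
  have hlb : ∀ I ∈ { I : ℝ | ∃ u : ℝ → ℝ, ContDiff ℝ 1 u ∧ u 0 = 0 ∧ u 1 = 1 ∧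
      I = weightedEnergy p α u }, 0 ≤ I := by
    rintro _ ⟨u, -, -, -, rfl⟩
    exact weightedEnergy_nonneg p α u
  refine le_antisymm (le_of_forall_pos_le_add fun ε hε => ?_)
    (le_csInf ⟨_, id, contDiff_id, rfl, rfl, rfl⟩ hlb)
  -- chosen so that `(2 / M) ^ (p - 1) = ε`
  set M : ℝ := 2 / ε ^ (p - 1)⁻¹ with hM_def
  have hM : 0 < M := by positivity
  calc _ ≤ weightedEnergy p α (logBump M) :=
        csInf_le ⟨0, hlb⟩ ⟨_, contDiff_logBump hM.le, logBump_zero M, logBump_one hM.ne', rfl⟩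
    _ ≤ (2 / M) ^ (p - 1) := weightedEnergy_logBump_le hp.le hαp hM
    _ = 0 + ε := by
        rw [hM_def, div_div_cancel₀ two_ne_zero, rpow_inv_rpow hε.le (by linarith), zero_add]
end

section
/- Let α < 1 - 1/p and let f ∈ C([0,1]) ∩ C¹((0,1]) be monotone nondecreasing with f(1) ≤ 1. Then for every u ∈ C_c^∞((0,1]): ∫₀¹ (|u'|^p − Λ_{α,p} |u/t|^p) t^{αp} dt ≥ ∫₀¹ (|u'|^p − Λ_{α,p} |u/t|^p) t^{αp} f(t) dt, where Λ_{α,p} = (1 - 1/p - α)^p. -/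
open MeasureTheory Real Set

private lemma key_ineq {p : ℝ} (hp : 1 < p) (a b : ℝ) :
    p * (|b| ^ (p-2) * b) * a ≤ |a| ^ p + (p - 1) * |b| ^ p := by
  have hp0 : (0:ℝ) < p := lt_trans one_pos hp
  have habs : |b| ^ (p-2) * b * a ≤ |a| * |b| ^ (p-1) := by
    calc |b| ^ (p-2) * b * a ≤ |(|b| ^ (p-2) * b * a)| := le_abs_self _
      _ = |b| ^ (p-2) * |b| * |a| := by
          rw [abs_mul, abs_mul, abs_of_nonneg (Real.rpow_nonneg (abs_nonneg b) _)]
      _ = |a| * |b| ^ (p-1) := by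
          rcases eq_or_ne b 0 with hb | hb
          · simp [hb, Real.zero_rpow (show p - 1 ≠ 0 by intro h; linarith)]
          · rw [← Real.rpow_add_one (abs_ne_zero.2 hb) (p-2)]
            norm_num; ring
  have hq : p.HolderConjugate (p/(p-1)) := Real.HolderConjugate.conjExponent hp
  have hy : |a| * |b| ^(p-1) ≤ |a| ^p / p + (|b| ^(p-1))^(p/(p-1)) / (p/(p-1)) :=
    Real.young_inequality_of_nonneg (abs_nonneg a) (Real.rpow_nonneg (abs_nonneg b) _) hq
  have h2 : (|b| ^(p-1))^(p/(p-1)) = |b| ^p := by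
    rw [← Real.rpow_mul (abs_nonneg b)]
    congr 1
    field_simp
    rw [div_self (show p - (1:ℝ) ≠ 0 by intro h; linarith)]
  rw [h2] at hy
  have h3 : p * (|a| * |b| ^(p-1)) ≤ |a| ^p + (p-1) * |b| ^p := by
    have := mul_le_mul_of_nonneg_left hy hp0.le
    calc p * (|a| * |b| ^(p-1)) ≤ p * (|a| ^p/p + |b| ^p/(p/(p-1))) := this
      _ = |a| ^p + (p-1) * |b| ^p := by
          field_simp
  have h4 : p * (|b| ^ (p-2) * b) * a = p * (|b| ^ (p-2) * b * a) := by ring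
  rw [h4]
  exact le_trans (mul_le_mul_of_nonneg_left habs hp0.le) h3

private lemma core_ineq {p α β T : ℝ} (hp : 1 < p) (hβ : 0 < β) (hT : 0 < T) (U V : ℝ) :
    p * (β ^ (p-1) * ((|U| ^ (p-2) * U) * V)) * T ^ (α*p - p + 1)
      ≤ |V| ^ p * T ^ (α*p) + (p-1) * (β ^ p * |U| ^ p) * T ^ (α*p - p) := by
  have h := key_ineq hp (V * T ^ α) (β * (U * T ^ (α-1)))
  have hTα : (0:ℝ) < T ^ α := Real.rpow_pos_of_pos hT α
  have hTα1 : (0:ℝ) < T ^ (α-1) := Real.rpow_pos_of_pos hT _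
  have hβ2 : β ^ (p-2) * β = β ^ (p-1) := by
    rw [← Real.rpow_add_one hβ.ne' (p-2)]
    congr 1
    ring
  have hT3 : T ^ ((α-1)*(p-2)) * T ^ (α-1) * T ^ α = T ^ (α*p - p + 1) := by
    rw [← Real.rpow_add hT, ← Real.rpow_add hT]
    congr 1
    ring
  have hT2 : T ^ ((α-1)*p) = T ^ (α*p - p) := by congr 1; ring
  have e1 : |V * T ^ α| ^ p = |V| ^ p * T ^ (α*p) := by
    rw [abs_mul, abs_of_pos hTα, Real.mul_rpow (abs_nonneg V) hTα.le, ← Real.rpow_mul hT.le]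
  have e2 : |β * (U * T ^ (α-1))| ^ p = β ^ p * (|U| ^ p * T ^ (α*p - p)) := by
    rw [abs_mul, abs_mul, abs_of_pos hβ, abs_of_pos hTα1,
        Real.mul_rpow hβ.le (mul_nonneg (abs_nonneg U) hTα1.le),
        Real.mul_rpow (abs_nonneg U) hTα1.le, ← Real.rpow_mul hT.le, hT2]
  have e3 : |β * (U * T ^ (α-1))| ^ (p-2) * (β * (U * T ^ (α-1))) * (V * T ^ α)
      = β ^ (p-1) * ((|U| ^ (p-2) * U) * V) * T ^ (α*p - p + 1) := by
    rw [abs_mul, abs_mul, abs_of_pos hβ, abs_of_pos hTα1,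
        Real.mul_rpow hβ.le (mul_nonneg (abs_nonneg U) hTα1.le),
        Real.mul_rpow (abs_nonneg U) hTα1.le, ← Real.rpow_mul hT.le,
        ← hβ2, ← hT3]
    ring
  rw [e1, e2] at h
  calc p * (β ^ (p-1) * ((|U| ^ (p-2) * U) * V)) * T ^ (α*p - p + 1)
      = p * (|β * (U * T ^ (α-1))| ^ (p-2) * (β * (U * T ^ (α-1))) * (V * T ^ α)) := by
        rw [e3]; ring
    _ = p * (|β * (U * T ^ (α-1))| ^ (p-2) * (β * (U * T ^ (α-1)))) * (V * T ^ α) := by ring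
    _ ≤ |V| ^ p * T ^ (α*p) + (p-1) * (β ^ p * (|U| ^ p * T ^ (α*p - p))) := h
    _ = |V| ^ p * T ^ (α*p) + (p-1) * (β ^ p * |U| ^ p) * T ^ (α*p - p) := by ring

/-- Comparison lemma with a monotone nondecreasing weight `f`, noncritical case. -/
theorem hardy_monotone_weight (p α : ℝ) (hp : 1 < p) (hα : α < 1 - 1/p)
    (f : ℝ → ℝ) (hfc : ContinuousOn f (Icc 0 1)) (hf1 : ContDiffOn ℝ 1 f (Ioc 0 1))
    (hfm : MonotoneOn f (Icc 0 1)) (hfle : f 1 ≤ 1)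
    (u : ℝ → ℝ) (hu : ContDiff ℝ (⊤ : ℕ∞) u) (h0 : ∃ a > (0:ℝ), ∀ t < a, u t = 0) :
    ∫ t in Ioc (0:ℝ) 1,
        (|deriv u t| ^ p - (1 - 1/p - α) ^ p * (|u t| / t) ^ p) * t ^ (α * p) ≥
      ∫ t in Ioc (0:ℝ) 1,
        (|deriv u t| ^ p - (1 - 1/p - α) ^ p * (|u t| / t) ^ p) * t ^ (α * p) * f t := by
  obtain ⟨a, ha0, hua⟩ := h0
  have hp0 : (0:ℝ) < p := lt_trans one_pos hp
  set a' : ℝ := min (a/2) (1/2) with ha'def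
  have ha'0 : 0 < a' := lt_min (by linarith) (by norm_num)
  have ha'1 : a' < 1 := lt_of_le_of_lt (min_le_right _ _) (by norm_num)
  have ha'a : a' < a := lt_of_le_of_lt (min_le_left _ _) (by linarith)
  set β : ℝ := 1 - 1/p - α with hβdef
  have hβ : 0 < β := by rw [hβdef]; linarith
  set γ : ℝ := α * p - p + 1 with hγdef
  set c : ℝ := β ^ (p-1) with hcdef
  have hc : 0 ≤ c := Real.rpow_nonneg hβ.le _
  set G : ℝ → ℝ := fun t => (|deriv u t| ^ p - β ^ p * (|u t| / t) ^ p) * t ^ (α * p)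
    with hGdef
  set φ : ℝ → ℝ := fun t => c * (|u t| ^ p * t ^ γ) with hφdef
  set w : ℝ → ℝ := fun t => 1 - f t with hwdef
  set D : ℝ → ℝ := fun t =>
    c * ((p * |u t| ^ (p-2) * u t * deriv u t) * t ^ γ + |u t| ^ p * (γ * t ^ (γ-1)))
    with hDdef
  have hcu : Continuous u := hu.continuous
  have hcu' : Continuous (deriv u) := hu.continuous_deriv (by simp)
  -- basic vanishing facts
  have hu0 : ∀ t ≤ a', u t = 0 := fun t ht => hua t (lt_of_le_of_lt ht ha'a)
  have hder0 : ∀ t ≤ a', deriv u t = 0 := by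
    intro t ht
    have hmem : Iio a ∈ nhds t := Iio_mem_nhds (lt_of_le_of_lt ht ha'a)
    have heq : u =ᶠ[nhds t] fun _ => (0:ℝ) := by
      filter_upwards [hmem] with s hs using hua s hs
    rw [heq.deriv_eq, deriv_const]
  have hG0 : ∀ t ∈ Ioc (0:ℝ) a', G t = 0 := by
    intro t ht
    simp [hGdef, hu0 t ht.2, hder0 t ht.2, Real.zero_rpow (ne_of_gt hp0)]
  -- continuity facts on [a', 1]
  have hpos : ∀ x ∈ Icc a' 1, x ≠ 0 := fun x hx => ne_of_gt (lt_of_lt_of_le ha'0 hx.1)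
  have hGc : ContinuousOn G (Icc a' 1) := by
    apply ContinuousOn.mul
    · apply ContinuousOn.sub
      · exact (hcu'.abs.rpow_const fun x => Or.inr hp0.le).continuousOn
      · exact continuousOn_const.mul
          (((hcu.abs.continuousOn.div continuousOn_id hpos).rpow_const
            fun x _ => Or.inr hp0.le))
    · exact continuousOn_id.rpow_const fun x hx => Or.inl (hpos x hx)
  have hwc : ContinuousOn w (Icc a' 1) :=
    continuousOn_const.sub (hfc.mono (Icc_subset_Icc ha'0.le le_rfl))
  have hφc : ContinuousOn φ (Icc a' 1) :=
    continuousOn_const.mul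
      (((hcu.abs.rpow_const fun x => Or.inr hp0.le).continuousOn).mul
        (continuousOn_id.rpow_const fun x hx => Or.inl (hpos x hx)))
  -- w is nonneg on [0,1]
  have hwnn : ∀ x ∈ Icc (0:ℝ) 1, 0 ≤ w x := by
    intro x hx
    have : f x ≤ f 1 := hfm hx (by constructor <;> norm_num) hx.2
    simp only [hwdef]
    linarith
  -- derivative of φ
  have hφderiv : ∀ x : ℝ, 0 < x → HasDerivAt φ (D x) x := by
    intro x hx
    have h1 : HasDerivAt (fun s => |u s| ^ p) (p * |u x| ^ (p-2) * u x * deriv u x) x := by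
      exact (hasDerivAt_abs_rpow (u x) hp).comp x (hu.differentiable (by simp) x).hasDerivAt
    have h2 : HasDerivAt (fun s : ℝ => s ^ γ) (γ * x ^ (γ-1)) x :=
      Real.hasDerivAt_rpow_const (Or.inl hx.ne')
    exact (h1.mul h2).const_mul c
  -- differentiability of f in the interior
  have hfderiv : ∀ x ∈ Ioo a' 1, HasDerivAt f (deriv f x) x := by
    intro x hx
    have hx0 : (0:ℝ) < x := lt_trans ha'0 hx.1
    have hnb : Ioc (0:ℝ) 1 ∈ nhds x :=
      Filter.mem_of_superset (Ioo_mem_nhds hx0 hx.2) Ioo_subset_Ioc_self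
    have hd : DifferentiableWithinAt ℝ f (Ioc 0 1) x :=
      (hf1.differentiableOn one_ne_zero) x ⟨hx0, hx.2.le⟩
    exact (hd.differentiableAt hnb).hasDerivAt
  -- deriv f ≥ 0 in the interior
  have hf'nn : ∀ x ∈ Ioo a' 1, 0 ≤ deriv f x := by
    intro x hx
    have hx0 : (0:ℝ) < x := lt_trans ha'0 hx.1
    have hd := hfderiv x hx
    have htend := hasDerivAt_iff_tendsto_slope.1 hd
    have hsub : nhdsWithin x (Ioi x) ≤ nhdsWithin x ({x}ᶜ) :=
      nhdsWithin_mono x fun y hy => Set.mem_compl_singleton_iff.2 (ne_of_gt hy)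
    refine ge_of_tendsto (htend.mono_left hsub) ?_
    have hmem : Ioc x 1 ∈ nhdsWithin x (Ioi x) :=
      Ioc_mem_nhdsGT_of_mem ⟨le_rfl, hx.2⟩
    filter_upwards [hmem] with y hy
    have hfle' : f x ≤ f y := hfm ⟨hx0.le, hx.2.le⟩ ⟨(hx0.trans hy.1).le, hy.2⟩ hy.1.le
    rw [slope_def_field]
    exact div_nonneg (by linarith) (by linarith [hy.1])
  -- pointwise inequality D ≤ G on (0,1]
  have hDG : ∀ x : ℝ, 0 < x → D x ≤ G x := by
    intro x hx
    have hcore := core_ineq (α := α) hp hβ hx (u x) (deriv u x)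
    have hxp : (0:ℝ) < x ^ p := Real.rpow_pos_of_pos hx p
    have i1 : (|u x| / x) ^ p * x ^ (α*p) = |u x| ^ p * x ^ (α*p - p) := by
      rw [Real.div_rpow (abs_nonneg _) hx.le, Real.rpow_sub hx]
      field_simp
    have i2 : c * γ = -(p * β ^ p) := by
      have hb : β ^ p = β ^ (p-1) * β := by
        rw [← Real.rpow_add_one hβ.ne' (p-1)]
        congr 1; ring
      have hpβ : p * β = p - 1 - α * p := by
        rw [hβdef]; field_simp
      rw [hcdef, hγdef, hb]
      linear_combination (β ^ (p-1)) * hpβ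
    have i3 : γ - 1 = α * p - p := by rw [hγdef]; ring
    have eG : G x = |deriv u x| ^ p * x ^ (α*p) - β ^ p * (|u x| ^ p * x ^ (α*p - p)) := by
      simp only [hGdef]
      rw [sub_mul, mul_assoc, i1]
    have eD : D x = p * (β ^ (p-1) * ((|u x| ^ (p-2) * u x) * deriv u x)) * x ^ (α*p - p + 1)
        - p * (β ^ p * (|u x| ^ p * x ^ (α*p - p))) := by
      simp only [hDdef]
      rw [i3, hγdef, hcdef]
      have hb : β ^ p = β ^ (p-1) * β := by
        rw [← Real.rpow_add_one hβ.ne' (p-1)]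
        congr 1; ring
      have hpβ : p * β = p - 1 - α * p := by
        rw [hβdef]; field_simp
      rw [hb]
      linear_combination (β ^ (p-1) * (|u x| ^ p * x ^ (α*p-p))) * hpβ
    rw [eG, eD]
    have : p * (β ^ (p-1) * ((|u x| ^ (p-2) * u x) * deriv u x)) * x ^ (α*p - p + 1)
        ≤ |deriv u x| ^ p * x ^ (α*p) + (p-1) * (β ^ p * |u x| ^ p) * x ^ (α*p - p) := hcore
    ring_nf at this ⊢
    linarith [this]
  -- integrability pieces
  have hGint : IntegrableOn G (Ioc a' 1) := (hGc.integrableOn_Icc).mono_set Ioc_subset_Icc_self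
  have hGfint : IntegrableOn (fun t => G t * f t) (Ioc a' 1) :=
    ((hGc.mul (hfc.mono (Icc_subset_Icc ha'0.le le_rfl))).integrableOn_Icc).mono_set
      Ioc_subset_Icc_self
  have hGwint : IntegrableOn (fun t => G t * w t) (Icc a' 1) := (hGc.mul hwc).integrableOn_Icc
  -- reduce from (0,1] to (a',1]
  have hsplit : ∀ H : ℝ → ℝ, (∀ t ∈ Ioc (0:ℝ) a', H t = 0) → IntegrableOn H (Ioc a' 1) →
      ∫ t in Ioc (0:ℝ) 1, H t = ∫ t in Ioc a' 1, H t := by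
    intro H hz hint
    have hun : Ioc (0:ℝ) 1 = Ioc 0 a' ∪ Ioc a' 1 := (Ioc_union_Ioc_eq_Ioc ha'0.le ha'1.le).symm
    have hz' : IntegrableOn H (Ioc 0 a') := by
      have hzero : IntegrableOn (fun _ => (0:ℝ)) (Ioc (0:ℝ) a') := integrableOn_zero
      exact hzero.congr_fun (fun x hx => (hz x hx).symm) measurableSet_Ioc
    rw [hun, setIntegral_union (Ioc_disjoint_Ioc_of_le le_rfl) measurableSet_Ioc hz' hint,
      setIntegral_congr_fun (g := fun _ => (0:ℝ)) measurableSet_Ioc (fun x hx => hz x hx)]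
    simp
  have hGf0 : ∀ t ∈ Ioc (0:ℝ) a', G t * f t = 0 := fun t ht => by rw [hG0 t ht]; ring
  have e2 : (fun t => (|deriv u t| ^ p - β ^ p * (|u t| / t) ^ p) * t ^ (α * p) * f t)
      = fun t => G t * f t := rfl
  rw [ge_iff_le, e2, hsplit G hG0 hGint, hsplit _ hGf0 hGfint]
  have hdiff : (∫ t in Ioc a' 1, G t) - ∫ t in Ioc a' 1, G t * f t
      = ∫ t in Ioc a' 1, G t * w t := by
    rw [← integral_sub hGint hGfint]
    apply setIntegral_congr_fun measurableSet_Ioc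
    intro x hx
    simp only [hwdef]
    ring
  have hkey : 0 ≤ ∫ t in Ioc a' 1, G t * w t := by
    have hψ : ∀ x ∈ Ioo a' 1, HasDerivWithinAt (fun t => φ t * w t)
        (D x * w x + φ x * (0 - deriv f x)) (Ioi x) x := by
      intro x hx
      exact (((hφderiv x (lt_trans ha'0 hx.1)).mul
        ((hasDerivAt_const x (1:ℝ)).sub (hfderiv x hx)))).hasDerivWithinAt
    have hpt : ∀ x ∈ Ioo a' 1, D x * w x + φ x * (0 - deriv f x) ≤ G x * w x := by
      intro x hx
      have hx0 : (0:ℝ) < x := lt_trans ha'0 hx.1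
      have h1 : D x ≤ G x := hDG x hx0
      have h2 : 0 ≤ w x := hwnn x ⟨hx0.le, hx.2.le⟩
      have h3 : 0 ≤ φ x := mul_nonneg hc (mul_nonneg (Real.rpow_nonneg (abs_nonneg _) _)
        (Real.rpow_nonneg hx0.le _))
      have h4 := hf'nn x hx
      nlinarith [mul_le_mul_of_nonneg_right h1 h2, mul_nonneg h3 h4]
    have hmain := intervalIntegral.sub_le_integral_of_hasDeriv_right_of_le ha'1.le
      (hφc.mul hwc) hψ hGwint hpt
    have hφa' : φ a' * w a' = 0 := by
      simp [hφdef, hu0 a' le_rfl, Real.zero_rpow (ne_of_gt hp0)]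
    have hφ1 : 0 ≤ φ 1 * w 1 :=
      mul_nonneg (mul_nonneg hc (mul_nonneg (Real.rpow_nonneg (abs_nonneg _) _)
        (Real.rpow_nonneg zero_le_one _))) (hwnn 1 ⟨zero_le_one, le_rfl⟩)
    rw [intervalIntegral.integral_of_le ha'1.le, Pi.mul_apply, Pi.mul_apply] at hmain
    linarith
  linarith [hdiff, hkey]
end

section
/- Let p ≥ 2. There exists a constant c(p) > 0 such that for every q ∈ [2,p] and every X ∈ ℝ: |1+X|^p − 1 − pX ≥ c(p)|X|^q. -/
open Real Set

private lemma master_ineq {p x : ℝ} (hp : 2 ≤ p) (hx : -1 ≤ x) :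
    1 + p * x + x ^ 2 ≤ (1 + x) ^ p := by
  have h0 : (0:ℝ) ≤ 1 + x := by linarith
  have hb : 1 + (p - 1) * x ≤ (1 + x) ^ (p - 1) :=
    one_add_mul_self_le_rpow_one_add hx (by linarith)
  have hmul : (1 + x) * (1 + (p - 1) * x) ≤ (1 + x) * (1 + x) ^ (p - 1) :=
    mul_le_mul_of_nonneg_left hb h0
  have hsplit : (1 + x) * (1 + x) ^ (p - 1) = (1 + x) ^ p := by
    rcases eq_or_lt_of_le h0 with h | h
    · rw [← h]
      simp [Real.zero_rpow (by linarith : p - 1 ≠ 0), Real.zero_rpow (by linarith : p ≠ 0)]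
    · nth_rewrite 1 [← Real.rpow_one (1 + x)]
      rw [← Real.rpow_add h]
      ring_nf
  nlinarith [sq_nonneg x, mul_nonneg (sq_nonneg x) (by linarith : (0:ℝ) ≤ p - 2)]

private lemma big_ineq {p X : ℝ} (hp : 2 ≤ p) (hX : 1 ≤ X) :
    X ^ p + p * X + 1 ≤ (1 + X) ^ p := by
  have hX0 : (0:ℝ) < X := by linarith
  have hinv0 : (0:ℝ) ≤ X⁻¹ := by positivity
  have hkey : 1 + p * X⁻¹ + X⁻¹ ^ 2 ≤ (1 + X⁻¹) ^ p := master_ineq hp (by linarith)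
  have hfact : (1 + X) ^ p = X ^ p * (1 + X⁻¹) ^ p := by
    rw [← Real.mul_rpow (le_of_lt hX0) (by linarith)]
    congr 1
    field_simp
    ring
  have hXp : (0:ℝ) < X ^ p := Real.rpow_pos_of_pos hX0 p
  have h1 : X ^ p * (1 + p * X⁻¹ + X⁻¹ ^ 2) ≤ X ^ p * (1 + X⁻¹) ^ p :=
    mul_le_mul_of_nonneg_left hkey (le_of_lt hXp)
  have hexp1 : X ^ p * X⁻¹ = X ^ (p - 1) := by
    rw [Real.rpow_sub hX0, Real.rpow_one, div_eq_mul_inv]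
  have hexp2 : X ^ p * X⁻¹ ^ 2 = X ^ (p - 2) := by
    rw [Real.rpow_sub hX0]
    rw [show (2:ℝ) = ((2:ℕ):ℝ) by norm_num, Real.rpow_natCast]
    field_simp
  have hge1 : X ≤ X ^ (p - 1) := by
    calc X = X ^ (1:ℝ) := (Real.rpow_one X).symm
    _ ≤ X ^ (p - 1) := Real.rpow_le_rpow_of_exponent_le hX (by linarith)
  have hge2 : (1:ℝ) ≤ X ^ (p - 2) := by
    calc (1:ℝ) = X ^ (0:ℝ) := (Real.rpow_zero X).symm
    _ ≤ X ^ (p - 2) := Real.rpow_le_rpow_of_exponent_le hX (by linarith)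
  have hdistr : X ^ p * (1 + p * X⁻¹ + X⁻¹ ^ 2)
      = X ^ p + p * (X ^ p * X⁻¹) + X ^ p * X⁻¹ ^ 2 := by ring
  rw [hfact]
  rw [hdistr, hexp1, hexp2] at h1
  nlinarith [mul_le_mul_of_nonneg_left hge1 (by linarith : (0:ℝ) ≤ p)]

/-- Fundamental inequality for `p ≥ 2`. -/
theorem fundamental_ineq_p_ge_two (p : ℝ) (hp : 2 ≤ p) :
    ∃ c > (0:ℝ), ∀ q ∈ Icc (2:ℝ) p, ∀ X : ℝ,
      |1 + X| ^ p - 1 - p * X ≥ c * |X| ^ q := by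
  refine ⟨2 ^ (-p), Real.rpow_pos_of_pos two_pos _, ?_⟩
  intro q hq X
  obtain ⟨hq2, hqp⟩ := hq
  have hq0 : (0:ℝ) < q := by linarith
  have hc1 : (2:ℝ) ^ (-p) ≤ 1 := by
    calc (2:ℝ) ^ (-p) ≤ 2 ^ (0:ℝ) :=
      Real.rpow_le_rpow_of_exponent_le one_le_two (by linarith)
    _ = 1 := Real.rpow_zero 2
  have habsq : (0:ℝ) ≤ |X| ^ q := Real.rpow_nonneg (abs_nonneg X) q
  rcases le_or_gt (-1) X with hX1 | hX1
  · -- X ≥ -1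
    have h0 : (0:ℝ) ≤ 1 + X := by linarith
    rw [abs_of_nonneg h0]
    rcases le_or_gt X 1 with hXle | hXgt
    · -- |X| ≤ 1 : use master_ineq, |X|^q ≤ X^2
      have habs1 : |X| ≤ 1 := abs_le.2 ⟨hX1, hXle⟩
      have hqx : |X| ^ q ≤ X ^ 2 := by
        rcases eq_or_ne X 0 with rfl | hX0
        · simp [Real.zero_rpow (ne_of_gt hq0)]
        · have hpos : 0 < |X| := abs_pos.2 hX0
          calc |X| ^ q ≤ |X| ^ (2:ℝ) :=
            Real.rpow_le_rpow_of_exponent_ge hpos habs1 hq2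
          _ = X ^ 2 := by
            rw [show (2:ℝ) = ((2:ℕ):ℝ) by norm_num, Real.rpow_natCast, sq_abs]
      have hm := master_ineq hp hX1
      have : (2:ℝ) ^ (-p) * |X| ^ q ≤ |X| ^ q :=
        mul_le_of_le_one_left habsq hc1
      linarith
    · -- X > 1 : use big_ineq, |X|^q ≤ X^p
      have hX1' : (1:ℝ) ≤ X := le_of_lt hXgt
      have hqx : |X| ^ q ≤ X ^ p := by
        rw [abs_of_nonneg (by linarith : (0:ℝ) ≤ X)]
        exact Real.rpow_le_rpow_of_exponent_le hX1' hqp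
      have hb := big_ineq hp hX1'
      have : (2:ℝ) ^ (-p) * |X| ^ q ≤ |X| ^ q :=
        mul_le_of_le_one_left habsq hc1
      linarith
  · -- X < -1
    set s : ℝ := -X with hs
    have hs1 : 1 < s := by simp [hs]; linarith
    have habsX : |X| = s := by rw [abs_of_neg (by linarith : X < 0)]
    have habs1X : |1 + X| = s - 1 := by
      rw [abs_of_nonpos (by linarith : 1 + X ≤ 0)]; simp only [hs]; ring
    rw [habsX, habs1X]
    have hs0 : (0:ℝ) ≤ s - 1 := by linarith
    rcases le_or_gt s 2 with hsle | hsgt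
    · -- 1 < s ≤ 2
      have hsp : (0:ℝ) ≤ (s - 1) ^ p := Real.rpow_nonneg hs0 p
      -- s^q = s^2 * s^(q-2) ≤ s^2 * 2^(p-2)
      have hsq : s ^ q ≤ s ^ 2 * 2 ^ (p - 2) := by
        have h1 : s ^ q = s ^ (2:ℝ) * s ^ (q - 2) := by
          rw [← Real.rpow_add (by linarith : (0:ℝ) < s)]; ring_nf
        have h2 : s ^ (q - 2) ≤ (2:ℝ) ^ (q - 2) :=
          Real.rpow_le_rpow (by linarith) hsle (by linarith)
        have h3 : (2:ℝ) ^ (q - 2) ≤ (2:ℝ) ^ (p - 2) :=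
          Real.rpow_le_rpow_of_exponent_le one_le_two (by linarith)
        have h4 : s ^ (2:ℝ) = s ^ 2 := by
          rw [show (2:ℝ) = ((2:ℕ):ℝ) by norm_num, Real.rpow_natCast]
        rw [h1, h4]
        exact mul_le_mul_of_nonneg_left (le_trans h2 h3) (sq_nonneg s)
      have hcmul : (2:ℝ) ^ (-p) * (s ^ 2 * 2 ^ (p - 2)) = s ^ 2 / 4 := by
        have : (2:ℝ) ^ (-p) * 2 ^ (p - 2) = 1 / 4 := by
          rw [← Real.rpow_add two_pos,
            show -p + (p - 2) = ((-2:ℤ):ℝ) by push_cast; ring, Real.rpow_intCast]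
          norm_num
        calc (2:ℝ) ^ (-p) * (s ^ 2 * 2 ^ (p - 2))
            = ((2:ℝ) ^ (-p) * 2 ^ (p - 2)) * s ^ 2 := by ring
        _ = s ^ 2 / 4 := by rw [this]; ring
      have hkey : (2:ℝ) ^ (-p) * s ^ q ≤ s ^ 2 / 4 := by
        calc (2:ℝ) ^ (-p) * s ^ q ≤ (2:ℝ) ^ (-p) * (s ^ 2 * 2 ^ (p - 2)) :=
          mul_le_mul_of_nonneg_left hsq (le_of_lt (Real.rpow_pos_of_pos two_pos _))
        _ = s ^ 2 / 4 := hcmul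
      -- (s-1)^p - 1 - p*X = (s-1)^p - 1 + p*s ≥ p*s - 1 ≥ 2s - 1 ≥ s^2/4
      have hps : 2 * s ≤ p * s := mul_le_mul_of_nonneg_right hp (by linarith)
      have hsq4 : s ^ 2 / 4 ≤ 2 * s - 1 := by nlinarith
      have : p * X = -(p * s) := by rw [hs]; ring
      nlinarith
    · -- s > 2
      have hhalf : s / 2 ≤ s - 1 := by linarith
      have h1 : (s / 2) ^ p ≤ (s - 1) ^ p :=
        Real.rpow_le_rpow (by linarith) hhalf (by linarith)
      have h2 : (s / 2) ^ p = 2 ^ (-p) * s ^ p := by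
        rw [Real.div_rpow (by linarith) (by norm_num : (0:ℝ) ≤ 2),
          Real.rpow_neg (by norm_num : (0:ℝ) ≤ 2)]
        ring
      have h3 : s ^ q ≤ s ^ p := Real.rpow_le_rpow_of_exponent_le (by linarith) hqp
      have h4 : (2:ℝ) ^ (-p) * s ^ q ≤ 2 ^ (-p) * s ^ p :=
        mul_le_mul_of_nonneg_left h3 (le_of_lt (Real.rpow_pos_of_pos two_pos _))
      have hps : 2 * s ≤ p * s := mul_le_mul_of_nonneg_right hp (by linarith)
      have hpx : p * X = -(p * s) := by rw [hs]; ring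
      nlinarith
end

section
/- Let 1 < p ≤ 2. There exists a constant c(p) > 0 such that for every M ≥ 1 and every X ∈ ℝ: |1+X|^p − 1 − pX ≥ c(p) M^{p-2} X² if |X| ≤ M, and |1+X|^p − 1 − pX ≥ c(p)|X|^p if |X| ≥ M. -/
/-!
Write `f(X) = powDefect p X = |1 + X|^p - 1 - pX`. For `X ≥ -1`, comparing `(1 + X)^p` with its
tangent line at the midpoint `1 + X/2`, and `(1 + X/2)^p` with its tangent line at `1`, gives
`f(X) ≥ p t ((1 + t)^(p-1) - 1)` with `t = X/2`; concavity of `s ↦ s^(p-1)` bounds this below by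
`p (p-1) t² (1 + |t|)^(p-2)`, which is comparable to `X² max(1, |X|)^(p-2) = min(X², |X|^p)`.
For `X ≤ -1` the power mean inequality `|X|^p ≤ 2^(p-1) (|1 + X|^p + 1)` suffices.
Since `max(1, |X|)^(p-2)` is at least `M^(p-2)` when `|X| ≤ M` and equals `|X|^(p-2)` when
`|X| ≥ M ≥ 1`, the lower bound `f(X) ≥ (p-1)/8 · X² max(1, |X|)^(p-2)` gives both regimes.
-/

open Real

namespace Real

theorem tangent_le_rpow {p a b : ℝ} (hp : 1 ≤ p) (ha : 0 ≤ a) (hb : 0 < b) :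
    b ^ p + p * b ^ (p - 1) * (a - b) ≤ a ^ p := by
  have h := one_add_mul_self_le_rpow_one_add (s := a / b - 1)
    (by linarith [div_nonneg ha hb.le]) hp
  rw [add_sub_cancel, div_rpow ha hb.le, le_div_iff₀ (rpow_pos_of_pos hb p)] at h
  calc b ^ p + p * b ^ (p - 1) * (a - b) = (1 + p * (a / b - 1)) * b ^ p := by
        rw [rpow_sub_one hb.ne']; field_simp
    _ ≤ a ^ p := h

theorem rpow_le_tangent {q a b : ℝ} (hq0 : 0 ≤ q) (hq1 : q ≤ 1) (ha : 0 ≤ a) (hb : 0 < b) :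
    a ^ q ≤ b ^ q + q * b ^ (q - 1) * (a - b) := by
  have h := rpow_one_add_le_one_add_mul_self (s := a / b - 1)
    (by linarith [div_nonneg ha hb.le]) hq0 hq1
  rw [add_sub_cancel, div_rpow ha hb.le, div_le_iff₀ (rpow_pos_of_pos hb q)] at h
  calc a ^ q ≤ (1 + q * (a / b - 1)) * b ^ q := h
    _ = b ^ q + q * b ^ (q - 1) * (a - b) := by
        rw [rpow_sub_one hb.ne']; field_simp

theorem rpow_add_le_mul_rpow_add_rpow {p a b : ℝ} (ha : 0 ≤ a) (hb : 0 ≤ b) (hp : 1 ≤ p) :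
    (a + b) ^ p ≤ 2 ^ (p - 1) * (a ^ p + b ^ p) := by
  lift a to NNReal using ha
  lift b to NNReal using hb
  exact_mod_cast NNReal.rpow_add_le_mul_rpow_add_rpow a b hp

end Real

theorem mul_sq_mul_rpow_le_mul_one_add_rpow_sub_one {q t : ℝ} (hq0 : 0 ≤ q) (hq1 : q ≤ 1)
    (ht : -1 ≤ t) : q * t ^ 2 * (1 + |t|) ^ (q - 1) ≤ t * ((1 + t) ^ q - 1) := by
  rcases le_total 0 t with ht0 | ht0
  · have h := rpow_le_tangent hq0 hq1 zero_le_one (by linarith : 0 < 1 + t)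
    rw [one_rpow] at h
    rw [abs_of_nonneg ht0]
    have hslope : q * t * (1 + t) ^ (q - 1) ≤ (1 + t) ^ q - 1 := by linarith
    nlinarith [mul_le_mul_of_nonneg_left hslope ht0]
  · have h := rpow_one_add_le_one_add_mul_self ht hq0 hq1
    have hw : (1 + |t|) ^ (q - 1) ≤ 1 :=
      rpow_le_one_of_one_le_of_nonpos (by linarith [abs_nonneg t]) (by linarith)
    nlinarith [mul_le_mul_of_nonneg_left hw (mul_nonneg hq0 (sq_nonneg t))]

theorem half_mul_max_rpow_le_one_add_half_rpow {s y : ℝ} (hs1 : -1 ≤ s) (hs0 : s ≤ 0)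
    (hy : 0 ≤ y) : 1 / 2 * max 1 y ^ s ≤ (1 + y / 2) ^ s := by
  have h2 : (1 : ℝ) / 2 ≤ 2 ^ s := by
    calc (1 : ℝ) / 2 = 2 ^ (-1 : ℝ) := by norm_num [rpow_neg_one]
      _ ≤ 2 ^ s := rpow_le_rpow_of_exponent_le one_le_two hs1
  calc 1 / 2 * max 1 y ^ s ≤ 2 ^ s * max 1 y ^ s := by gcongr
    _ = (2 * max 1 y) ^ s := (mul_rpow zero_le_two (by positivity)).symm
    _ ≤ (1 + y / 2) ^ s := by
        apply rpow_le_rpow_of_nonpos (by positivity) _ hs0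
        linarith [le_max_left 1 y, le_max_right 1 y]

theorem sq_mul_abs_rpow_sub_two {X : ℝ} (hX : X ≠ 0) (p : ℝ) :
    X ^ 2 * |X| ^ (p - 2) = |X| ^ p := by
  rw [rpow_sub (abs_pos.mpr hX), rpow_two, sq_abs]
  field_simp

noncomputable def powDefect (p X : ℝ) : ℝ := |1 + X| ^ p - 1 - p * X

section

variable {p : ℝ}

theorem mul_one_add_half_rpow_sub_one_le_powDefect (hp : 1 ≤ p) {X : ℝ} (hX : -1 ≤ X) :
    p * (X / 2) * ((1 + X / 2) ^ (p - 1) - 1) ≤ powDefect p X := by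
  have htan := tangent_le_rpow hp (by linarith : 0 ≤ 1 + X) (by linarith : 0 < 1 + X / 2)
  have hbern := one_add_mul_self_le_rpow_one_add (by linarith : -1 ≤ X / 2) hp
  rw [powDefect, abs_of_nonneg (by linarith : 0 ≤ 1 + X)]
  nlinarith

theorem sq_mul_one_add_abs_rpow_le_powDefect (hp1 : 1 ≤ p) (hp2 : p ≤ 2) {X : ℝ}
    (hX : -1 ≤ X) :
    p * (p - 1) / 4 * X ^ 2 * (1 + |X| / 2) ^ (p - 2) ≤ powDefect p X := by
  have h := mul_sq_mul_rpow_le_mul_one_add_rpow_sub_one (q := p - 1) (t := X / 2)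
    (by linarith) (by linarith) (by linarith)
  rw [abs_div, abs_two, show p - 1 - 1 = p - 2 by ring] at h
  calc p * (p - 1) / 4 * X ^ 2 * (1 + |X| / 2) ^ (p - 2)
      = p * ((p - 1) * (X / 2) ^ 2 * (1 + |X| / 2) ^ (p - 2)) := by ring
    _ ≤ p * (X / 2 * ((1 + X / 2) ^ (p - 1) - 1)) := by gcongr
    _ ≤ powDefect p X := by
        rw [← mul_assoc]; exact mul_one_add_half_rpow_sub_one_le_powDefect hp1 hX

theorem abs_rpow_le_powDefect_of_le_neg_one (hp1 : 1 ≤ p) (hp2 : p ≤ 2) {X : ℝ}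
    (hX : X ≤ -1) :
    (p - 1) / 2 * |X| ^ p ≤ powDefect p X := by
  have hmean := rpow_add_le_mul_rpow_add_rpow (by linarith : 0 ≤ -X - 1) zero_le_one hp1
  have h2 : (2 : ℝ) ^ (p - 1) ≤ 2 := by
    simpa using rpow_le_rpow_of_exponent_le one_le_two (by linarith : p - 1 ≤ 1)
  have hnn : 0 ≤ (-X - 1) ^ p := rpow_nonneg (by linarith) p
  rw [one_rpow, sub_add_cancel] at hmean
  rw [powDefect, abs_of_nonpos (by linarith : 1 + X ≤ 0), abs_of_nonpos (by linarith : X ≤ 0),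
    show -(1 + X) = -X - 1 by ring]
  nlinarith [mul_le_mul_of_nonneg_right h2 (by positivity : 0 ≤ (-X - 1) ^ p + 1)]

theorem sq_mul_max_rpow_le_powDefect (hp1 : 1 ≤ p) (hp2 : p ≤ 2) (X : ℝ) :
    (p - 1) / 8 * X ^ 2 * max 1 |X| ^ (p - 2) ≤ powDefect p X := by
  rcases le_total (-1) X with hX | hX
  · have hw := half_mul_max_rpow_le_one_add_half_rpow (s := p - 2) (by linarith) (by linarith)
      (abs_nonneg X)
    calc (p - 1) / 8 * X ^ 2 * max 1 |X| ^ (p - 2)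
        ≤ p * (p - 1) / 4 * X ^ 2 * (1 / 2 * max 1 |X| ^ (p - 2)) := by
          have : 0 ≤ X ^ 2 * max 1 |X| ^ (p - 2) := by positivity
          nlinarith [mul_nonneg (mul_nonneg (sub_nonneg.2 hp1) (sub_nonneg.2 hp1)) this]
      _ ≤ p * (p - 1) / 4 * X ^ 2 * (1 + |X| / 2) ^ (p - 2) := by
          gcongr
      _ ≤ powDefect p X := sq_mul_one_add_abs_rpow_le_powDefect hp1 hp2 hX
  · have hmax : max 1 |X| = |X| := max_eq_right (by rw [abs_of_nonpos (by linarith)]; linarith)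
    rw [hmax, mul_assoc, sq_mul_abs_rpow_sub_two (by linarith) p]
    have := abs_rpow_le_powDefect_of_le_neg_one hp1 hp2 hX
    nlinarith [rpow_nonneg (abs_nonneg X) p]

end

/-- Fundamental inequality for `1 < p ≤ 2`. -/
theorem fundamental_ineq_p_le_two (p : ℝ) (hp1 : 1 < p) (hp2 : p ≤ 2) :
    ∃ c > (0:ℝ), ∀ M : ℝ, 1 ≤ M → ∀ X : ℝ,
      (|X| ≤ M → |1 + X| ^ p - 1 - p * X ≥ c * M ^ (p - 2) * X ^ 2) ∧
      (M ≤ |X| → |1 + X| ^ p - 1 - p * X ≥ c * |X| ^ p) := by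
  refine ⟨(p - 1) / 8, by linarith, fun M hM X => ?_⟩
  have key := sq_mul_max_rpow_le_powDefect hp1.le hp2 X
  constructor
  · intro hXM
    have hw : M ^ (p - 2) ≤ max 1 |X| ^ (p - 2) :=
      rpow_le_rpow_of_nonpos (one_pos.trans_le (le_max_left _ _)) (max_le hM hXM) (by linarith)
    calc (p - 1) / 8 * M ^ (p - 2) * X ^ 2 ≤ (p - 1) / 8 * X ^ 2 * max 1 |X| ^ (p - 2) := by
          rw [mul_right_comm]; gcongr
      _ ≤ _ := key
  · intro hMX
    rwa [max_eq_right (hM.trans hMX), mul_assoc,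
      sq_mul_abs_rpow_sub_two (abs_pos.mp (one_pos.trans_le (hM.trans hMX))) p] at key
end

section
/- Let R > e and A₁(t) = log(R/t). Then for any h ∈ C¹_c((0,1]): ∫₀¹ |h'(t)|² t dt ≥ (1/4) ∫₀¹ |h(t)|² A₁(t)^{-2} dt/t − (1/2) A₁(1)^{-1} h(1)². -/
open MeasureTheory Real Set Filter Topology

/-! With `A t = log (R / t)`, so that `A' = -1/t`, the flux `F = h² / (2A)` has derivative
`G = h h' / A + h² / (2 t A²)`, and completing the square gives
`t h'² - h² / (4 t A²) + G = (2 t A h' + h)² / (4 t A²) ≥ 0`. Integrating over `[c, 1]` with `h = 0` on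
`(0, c]`, the integral of `G` is the boundary term `h(1)² / (2 log R)`. -/

lemma log_div_pos {R t : ℝ} (ht : 0 < t) (htR : t < R) : 0 < log (R / t) :=
  log_pos ((one_lt_div ht).2 htR)

lemma hasDerivAt_log_div {R t : ℝ} (hR : R ≠ 0) (ht : t ≠ 0) :
    HasDerivAt (fun s => log (R / s)) (-t⁻¹) t := by
  have hsub : HasDerivAt (fun s => log R - log s) (-t⁻¹) t :=
    (hasDerivAt_log ht).const_sub (log R)
  refine hsub.congr_of_eventuallyEq ?_
  filter_upwards [isOpen_ne.mem_nhds ht] with s hs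
  exact log_div hR hs

lemma hasDerivAt_sq_div_two_log_div {h : ℝ → ℝ} {h' R t : ℝ} (hh : HasDerivAt h h' t)
    (hR : R ≠ 0) (ht : t ≠ 0) (hA : log (R / t) ≠ 0) :
    HasDerivAt (fun s => h s ^ 2 / (2 * log (R / s)))
      (h t * h' / log (R / t) + h t ^ 2 / (2 * t * log (R / t) ^ 2)) t := by
  refine ((hh.fun_pow 2).div ((hasDerivAt_log_div hR ht).const_mul 2)
    (mul_ne_zero two_ne_zero hA)).congr_deriv ?_
  field_simp
  ring

/-- Completing the square: the difference of the two sides is `(2 d t A + u)² / (4 t A²)`. -/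
lemma quarter_sq_div_sub_le_sq_mul {t A u d : ℝ} (ht : 0 < t) (hA : 0 < A) :
    1 / 4 * (u ^ 2 / (A ^ 2 * t)) - (u * d / A + u ^ 2 / (2 * t * A ^ 2)) ≤ d ^ 2 * t := by
  have hsq : d ^ 2 * t - (1 / 4 * (u ^ 2 / (A ^ 2 * t)) - (u * d / A + u ^ 2 / (2 * t * A ^ 2)))
      = (2 * d * t * A + u) ^ 2 / (4 * t * A ^ 2) := by
    field_simp
    ring
  have : 0 ≤ (2 * d * t * A + u) ^ 2 / (4 * t * A ^ 2) := by positivity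
  linarith

theorem log_hardy_Icc {R c b : ℝ} {h h' : ℝ → ℝ} (hc : 0 < c) (hcb : c ≤ b) (hbR : b < R)
    (hd : ∀ t ∈ Icc c b, HasDerivAt h (h' t) t) (hh' : ContinuousOn h' (Icc c b)) :
    1 / 4 * (∫ t in c..b, h t ^ 2 / (log (R / t) ^ 2 * t))
        - h b ^ 2 / (2 * log (R / b)) + h c ^ 2 / (2 * log (R / c))
      ≤ ∫ t in c..b, h' t ^ 2 * t := by
  have hpos : ∀ t ∈ Icc c b, 0 < t := fun t ht => hc.trans_le ht.1
  have hA : ∀ t ∈ Icc c b, 0 < log (R / t) := fun t ht =>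
    log_div_pos (hpos t ht) (ht.2.trans_lt hbR)
  have hR : R ≠ 0 := by linarith
  have hh : ContinuousOn h (Icc c b) := fun t ht =>
    (hd t ht).continuousAt.continuousWithinAt
  have hlog : ContinuousOn (fun t => log (R / t)) (Icc c b) := fun t ht =>
    (hasDerivAt_log_div hR (hpos t ht).ne').continuousAt.continuousWithinAt
  set G := fun t => h t * h' t / log (R / t) + h t ^ 2 / (2 * t * log (R / t) ^ 2)
  have hG : ContinuousOn G (Icc c b) :=
    ((hh.mul hh').div hlog fun t ht => (hA t ht).ne').add <|
      (hh.pow 2).div ((continuousOn_const.mul continuousOn_id).mul (hlog.pow 2))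
        fun t ht => by have := hA t ht; have := hpos t ht; positivity
  have hQ : ContinuousOn (fun t => h t ^ 2 / (log (R / t) ^ 2 * t)) (Icc c b) :=
    (hh.pow 2).div ((hlog.pow 2).mul continuousOn_id)
      fun t ht => by have := hA t ht; have := hpos t ht; positivity
  have hI : ∀ {f : ℝ → ℝ}, ContinuousOn f (Icc c b) → IntervalIntegrable f volume c b :=
    fun hf => (uIcc_of_le hcb ▸ hf).intervalIntegrable
  have hFTC : ∫ t in c..b, G t = h b ^ 2 / (2 * log (R / b)) - h c ^ 2 / (2 * log (R / c)) :=
    intervalIntegral.integral_eq_sub_of_hasDerivAt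
      (fun t ht => by
        rw [uIcc_of_le hcb] at ht
        exact hasDerivAt_sq_div_two_log_div (hd t ht) hR (hpos t ht).ne' (hA t ht).ne')
      (hI hG)
  have hmono : ∫ t in c..b, (1 / 4 * (h t ^ 2 / (log (R / t) ^ 2 * t)) - G t)
      ≤ ∫ t in c..b, h' t ^ 2 * t :=
    intervalIntegral.integral_mono_on hcb ((hI hQ).const_mul _ |>.sub (hI hG))
      (hI ((hh'.pow 2).mul continuousOn_id))
      fun t ht => quarter_sq_div_sub_le_sq_mul (hpos t ht) (hA t ht)
  rw [intervalIntegral.integral_sub ((hI hQ).const_mul _) (hI hG),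
    intervalIntegral.integral_const_mul, hFTC] at hmono
  linarith

lemma setIntegral_Ioc_eq_intervalIntegral_of_eq_zero {f : ℝ → ℝ} {a b c : ℝ} (hac : a ≤ c)
    (hcb : c ≤ b) (hf : ∀ t ≤ c, f t = 0) : ∫ t in Ioc a b, f t = ∫ t in c..b, f t := by
  rw [intervalIntegral.integral_of_le hcb]
  refine setIntegral_eq_of_subset_of_forall_sdiff_eq_zero measurableSet_Ioc
    (Ioc_subset_Ioc_left hac) fun t ht => hf t ?_
  by_contra! hct
  exact ht.2 ⟨hct, ht.1.2⟩

/-- One dimensional logarithmic Hardy inequality with boundary term. -/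
theorem log_hardy_one (R : ℝ) (hR : Real.exp 1 < R)
    (h : ℝ → ℝ) (hh : ContDiff ℝ 1 h) (h0 : ∃ a > (0:ℝ), ∀ t < a, h t = 0) :
    ∫ t in Ioc (0:ℝ) 1, |deriv h t| ^ 2 * t ≥
      (1/4) * (∫ t in Ioc (0:ℝ) 1, (h t) ^ 2 / ((Real.log (R / t)) ^ 2 * t))
        - (1/2) * (Real.log R)⁻¹ * (h 1) ^ 2 := by
  obtain ⟨a, ha, hza⟩ := h0
  obtain ⟨c, hc, hc1, hca⟩ : ∃ c, 0 < c ∧ c ≤ 1 ∧ c < a :=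
    ⟨min (a / 2) 1, lt_min (half_pos ha) one_pos, min_le_right _ _,
      (min_le_left _ _).trans_lt (half_lt_self ha)⟩
  have hderiv : ∀ t < a, deriv h t = 0 := fun t ht => by
    have hloc : h =ᶠ[𝓝 t] fun _ => 0 := (eventually_lt_nhds ht).mono hza
    rw [hloc.deriv_eq, deriv_const]
  have hardy := log_hardy_Icc hc hc1 ((one_lt_exp_iff.2 one_pos).trans hR)
    (fun t _ => (hh.differentiable one_ne_zero t).hasDerivAt)
    (hh.continuous_deriv le_rfl).continuousOn
  rw [hza c hca, div_one] at hardy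
  rw [setIntegral_Ioc_eq_intervalIntegral_of_eq_zero hc.le hc1 fun t ht => by
      simp [hderiv t (ht.trans_lt hca)],
    setIntegral_Ioc_eq_intervalIntegral_of_eq_zero hc.le hc1 fun t ht => by
      simp [hza t (ht.trans_lt hca)]]
  simp only [sq_abs, ge_iff_le]
  convert hardy using 2
  ring
end

section
/- Let R > e^e, A₁(t) = log(R/t) and A₂(t) = log(A₁(t)). Then for any h ∈ C¹_c((0,1]): ∫₀¹ |h'(t)|² t A₁(t) dt ≥ (1/4) ∫₀¹ |h(t)|² / (t A₁(t) A₂(t)²) dt − (1/2) A₂(1)^{-1} h(1)². -/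
/-!
With `G = 1 / A₂` one has `G' = 1 / (t A₁ A₂²)`, so that `G² = (t A₁) G'`. Integrating `(h²)' G`
by parts on an interval `[c, 1]` left of which `h` vanishes expresses `∫ h² G'` through the boundary
term `h(1)² G(1)` and the cross term `-∫ 2 h h' G`, and the pointwise AM-GM bound
`|2 h h' G| ≤ ½ h² G' + 2 h'² t A₁` absorbs half of `∫ h² G'` into the left-hand side.
-/

open MeasureTheory Real Set

lemma neg_two_mul_mul_mul_le_of_sq_le_mul {f f' G w p : ℝ} (hw : 0 ≤ w) (hp : 0 ≤ p)
    (hG : G ^ 2 ≤ p * w) : -(2 * f * f' * G) ≤ 1 / 2 * (f ^ 2 * w) + 2 * (f' ^ 2 * p) := by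
  rcases hw.eq_or_lt with rfl | hw
  · obtain rfl : G = 0 := pow_eq_zero_iff two_ne_zero |>.1 <|
      le_antisymm (by simpa using hG) (sq_nonneg G)
    nlinarith [sq_nonneg f']
  · refine le_of_mul_le_mul_left ?_ (mul_pos two_pos hw)
    nlinarith [sq_nonneg (w * f + 2 * f' * G), mul_nonneg (sq_nonneg f') (sub_nonneg.2 hG)]

theorem integral_sq_mul_le_of_hasDerivAt {f f' G w p : ℝ → ℝ} {a b : ℝ} (hab : a ≤ b)
    (hf : ∀ x ∈ Icc a b, HasDerivAt f (f' x) x) (hG : ∀ x ∈ Icc a b, HasDerivAt G (w x) x)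
    (hf' : ContinuousOn f' (Icc a b)) (hwc : ContinuousOn w (Icc a b))
    (hpc : ContinuousOn p (Icc a b)) (hw : ∀ x ∈ Icc a b, 0 ≤ w x)
    (hp : ∀ x ∈ Icc a b, 0 ≤ p x) (hGpw : ∀ x ∈ Icc a b, G x ^ 2 ≤ p x * w x) :
    ∫ x in a..b, f x ^ 2 * w x ≤
      2 * (f b ^ 2 * G b - f a ^ 2 * G a) + 4 * ∫ x in a..b, f' x ^ 2 * p x := by
  have hfc : ContinuousOn f (Icc a b) := fun x hx => (hf x hx).continuousAt.continuousWithinAt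
  have hGc : ContinuousOn G (Icc a b) := fun x hx => (hG x hx).continuousAt.continuousWithinAt
  have hsq : ∀ x ∈ uIcc a b, HasDerivAt (fun y => f y ^ 2) (2 * f x * f' x) x := fun x hx => by
    rw [uIcc_of_le hab] at hx
    simpa using (hf x hx).fun_pow 2
  have hcross : IntervalIntegrable (fun x => 2 * f x * f' x * G x) volume a b :=
    (((continuousOn_const.mul hfc).mul hf').mul hGc).intervalIntegrable_of_Icc hab
  have hmain : IntervalIntegrable (fun x => f x ^ 2 * w x) volume a b :=
    ((hfc.pow 2).mul hwc).intervalIntegrable_of_Icc hab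
  have henergy : IntervalIntegrable (fun x => f' x ^ 2 * p x) volume a b :=
    ((hf'.pow 2).mul hpc).intervalIntegrable_of_Icc hab
  have hparts := intervalIntegral.integral_deriv_mul_eq_sub hsq
    (fun x hx => hG x (uIcc_of_le hab ▸ hx))
    (((continuousOn_const.mul hfc).mul hf').intervalIntegrable_of_Icc hab)
    (hwc.intervalIntegrable_of_Icc hab)
  rw [intervalIntegral.integral_add hcross hmain] at hparts
  have hamgm := intervalIntegral.integral_mono_on hab hcross.neg
    ((hmain.const_mul (1 / 2)).add (henergy.const_mul 2))
    fun x hx => neg_two_mul_mul_mul_le_of_sq_le_mul (f := f x) (hw x hx) (hp x hx) (hGpw x hx)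
  simp only [Pi.neg_apply] at hamgm
  rw [intervalIntegral.integral_neg, intervalIntegral.integral_add (hmain.const_mul _)
    (henergy.const_mul _), intervalIntegral.integral_const_mul,
    intervalIntegral.integral_const_mul] at hamgm
  linarith

lemma setIntegral_Ioc_eq_intervalIntegral_of_eqOn_zero {E : Type*} [NormedAddCommGroup E]
    [NormedSpace ℝ E] {f : ℝ → E} {a b c : ℝ} (hac : a ≤ c) (hcb : c ≤ b)
    (hf : ∀ x ∈ Ioc a c, f x = 0) : ∫ x in Ioc a b, f x = ∫ x in c..b, f x := by
  rw [intervalIntegral.integral_of_le hcb]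
  exact setIntegral_eq_of_subset_of_forall_sdiff_eq_zero measurableSet_Ioc
    (Ioc_subset_Ioc_left hac) fun x hx => hf x ⟨hx.1.1, not_lt.1 fun h => hx.2 ⟨h, hx.1.2⟩⟩

section LogLog

variable {R t : ℝ}

lemma exp_one_lt_log_div (hR : exp (exp 1) < R) (ht : 0 < t) (ht1 : t ≤ 1) :
    exp 1 < log (R / t) := by
  have hR0 : 0 < R := (exp_pos _).trans hR
  rw [lt_log_iff_exp_lt (by positivity)]
  exact hR.trans_le (le_div_self hR0.le ht ht1)

lemma one_lt_log_log_div (hR : exp (exp 1) < R) (ht : 0 < t) (ht1 : t ≤ 1) :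
    1 < log (log (R / t)) := by
  simpa using log_lt_log (exp_pos 1) (exp_one_lt_log_div hR ht ht1)

lemma hasDerivAt_inv_log_log_div (hR : R ≠ 0) (ht : t ≠ 0) (h₁ : log (R / t) ≠ 0)
    (h₂ : log (log (R / t)) ≠ 0) :
    HasDerivAt (fun s => (log (log (R / s)))⁻¹)
      (t * log (R / t) * log (log (R / t)) ^ 2)⁻¹ t := by
  have hdiv : HasDerivAt (fun s => R / s) (R * -(t ^ 2)⁻¹) t := (hasDerivAt_inv ht).const_mul R
  refine (((hdiv.log (div_ne_zero hR ht)).log h₁).fun_inv h₂).congr_deriv ?_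
  field_simp

lemma loglog_hardy_Icc {c : ℝ} (hR : exp (exp 1) < R) (hc : 0 < c) (hc1 : c ≤ 1)
    {h : ℝ → ℝ} (hh : ContDiff ℝ 1 h) :
    ∫ t in c..1, h t ^ 2 * (t * log (R / t) * log (log (R / t)) ^ 2)⁻¹ ≤
      2 * (h 1 ^ 2 * (log (log R))⁻¹ - h c ^ 2 * (log (log (R / c)))⁻¹) +
        4 * ∫ t in c..1, deriv h t ^ 2 * (t * log (R / t)) := by
  have hR0 : R ≠ 0 := ((exp_pos _).trans hR).ne'
  have hpos : ∀ t ∈ Icc c 1, 0 < t ∧ 0 < log (R / t) ∧ 0 < log (log (R / t)) := fun t ht => by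
    have ht0 := hc.trans_le ht.1
    exact ⟨ht0, (exp_pos 1).trans (exp_one_lt_log_div hR ht0 ht.2),
      one_pos.trans (one_lt_log_log_div hR ht0 ht.2)⟩
  simpa using integral_sq_mul_le_of_hasDerivAt hc1
    (fun t _ => (hh.differentiable one_ne_zero t).hasDerivAt)
    (fun t ht => hasDerivAt_inv_log_log_div hR0 (hpos t ht).1.ne' (hpos t ht).2.1.ne'
      (hpos t ht).2.2.ne')
    (hh.continuous_deriv le_rfl).continuousOn
    (continuousOn_of_forall_continuousAt fun t ht => by
      obtain ⟨h₀, h₁, h₂⟩ := hpos t ht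
      fun_prop (disch := simp [hR0, h₀.ne', h₁.ne', h₂.ne']))
    (continuousOn_of_forall_continuousAt fun t ht => by
      fun_prop (disch := simp [hR0, (hpos t ht).1.ne']))
    (fun t ht => by obtain ⟨h₀, h₁, h₂⟩ := hpos t ht; positivity)
    (fun t ht => by obtain ⟨h₀, h₁, -⟩ := hpos t ht; positivity)
    (fun t ht => by obtain ⟨h₀, h₁, h₂⟩ := hpos t ht; exact le_of_eq (by field_simp))

end LogLog

/-- One dimensional doubly-logarithmic Hardy inequality with boundary term. -/
theorem loglog_hardy_one (R : ℝ) (hR : Real.exp (Real.exp 1) < R)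
    (h : ℝ → ℝ) (hh : ContDiff ℝ 1 h) (h0 : ∃ a > (0:ℝ), ∀ t < a, h t = 0) :
    ∫ t in Ioc (0:ℝ) 1, |deriv h t| ^ 2 * t * Real.log (R / t) ≥
      (1/4) * (∫ t in Ioc (0:ℝ) 1,
          (h t) ^ 2 / (t * Real.log (R / t) * (Real.log (Real.log (R / t))) ^ 2))
        - (1/2) * (Real.log (Real.log R))⁻¹ * (h 1) ^ 2 := by
  obtain ⟨a, ha, hza⟩ := h0
  set c := min (a / 2) 1
  have hc : 0 < c := by positivity
  have hc1 : c ≤ 1 := min_le_right _ _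
  have hca : c < a := (min_le_left _ _).trans_lt (half_lt_self ha)
  have hderiv : ∀ t < a, deriv h t = 0 := fun t ht =>
    (Filter.eventuallyEq_of_mem (Iio_mem_nhds ht) hza).deriv_eq.trans (deriv_const t 0)
  have hIcc := loglog_hardy_Icc hR hc hc1 hh
  rw [hza c hca] at hIcc
  rw [setIntegral_Ioc_eq_intervalIntegral_of_eqOn_zero hc.le hc1
      fun t ht => by simp [hderiv t (ht.2.trans_lt hca)],
    setIntegral_Ioc_eq_intervalIntegral_of_eqOn_zero hc.le hc1
      fun t ht => by simp [hza t (ht.2.trans_lt hca)]]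
  simp only [sq_abs, mul_assoc, div_eq_mul_inv] at hIcc ⊢
  linarith
end
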